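/- arXiv:1308.5399 — 7 statements merged into one kernel-verified Lean document; each statement's English description precedes it below -/
import Mathlib

section
/- The number of Stirling permutations of the multiset {1^{k_1}, ..., n^{k_n}} equals the product over i from 1 to n-1 of (k_1 + ... + k_i + 1). -/
open Finset

/-- The multiset {1^{k 0}, 2^{k 1}, ..., n^{k (n-1)}}. -/
def multisetOf (k : ℕ → ℕ) (n : ℕ) : Multiset ℕ :=
  ∑ i ∈ Finset.range n, Multiset.replicate (k i) (i + 1)

/-- A word is a Stirling permutation: between two equal letters, all letters are ≥. -/
def IsStirlingPerm (w : List ℕ) : Prop :=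
  ∀ i s j : ℕ, i < s → s < j → j < w.length →
    w.getD i 0 = w.getD j 0 → w.getD i 0 ≤ w.getD s 0

/-- Number of descents of a word: indices i (0-based, i < K-1) with w i > w (i+1),
together with the last index. -/
def descents (w : List ℕ) : ℕ :=
  ((Finset.range (w.length - 1)).filter fun i => w.getD (i + 1) 0 < w.getD i 0).card + 1

/-- Eulerian numbers A_{k,i}: number of Stirling permutations of {1^{k_1},...,n^{k_n}}
with exactly i descents. -/
noncomputable def eulerianA (k : ℕ → ℕ) (n i : ℕ) : ℕ :=
  Nat.card {w : List ℕ //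
    (↑w : Multiset ℕ) = multisetOf k n ∧ IsStirlingPerm w ∧ descents w = i}

/-- K = k_1 + ... + k_n. -/
def bigK (k : ℕ → ℕ) (n : ℕ) : ℕ := ∑ i ∈ Finset.range n, k i

/-- B_k(m): the coefficient of x^m in (∑_{i=1}^n A_{k,i} x^i)/(1-x)^{K+1}. -/
noncomputable def Bpoly (k : ℕ → ℕ) (n m : ℕ) : ℕ :=
  ∑ i ∈ Finset.Icc 1 n, eulerianA k n i * Nat.choose (bigK k n + m - i) (bigK k n)

/-- b_k(m): the coefficient of x^m in (∑_{i=K-n+1}^{K} A_{k,K+1-i} x^i)/(1-x)^{K+1}. -/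
noncomputable def bpoly (k : ℕ → ℕ) (n m : ℕ) : ℕ :=
  ∑ i ∈ Finset.Icc (bigK k n - n + 1) (bigK k n),
    eulerianA k n (bigK k n + 1 - i) * Nat.choose (bigK k n + m - i) (bigK k n)

def insertBlock (m c p : ℕ) (w : List ℕ) : List ℕ :=
  w.take p ++ (List.replicate c m ++ w.drop p)

lemma length_insertBlock (m c p : ℕ) (w : List ℕ) (hp : p ≤ w.length) :
    (insertBlock m c p w).length = w.length + c := by
  simp [insertBlock]
  omega

lemma getD_replicate (c m t : ℕ) :
    (List.replicate c m).getD t 0 = if t < c then m else 0 := by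
  rw [List.getD_eq_getElem?_getD, List.getElem?_replicate]
  split <;> simp

lemma getD_insertBlock (m c p : ℕ) (w : List ℕ) (hp : p ≤ w.length) (t : ℕ) :
    (insertBlock m c p w).getD t 0 =
      if t < p then w.getD t 0 else if t < p + c then m else w.getD (t - c) 0 := by
  have hlt : (w.take p).length = p := by simp; omega
  by_cases h1 : t < p
  · rw [insertBlock, List.getD_append _ _ _ _ (by omega)]
    rw [if_pos h1, List.getD_eq_getElem?_getD, List.getD_eq_getElem?_getD,
      List.getElem?_take, if_pos h1]
  · rw [insertBlock, List.getD_append_right _ _ _ _ (by omega), hlt, if_neg h1]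
    by_cases h2 : t < p + c
    · rw [List.getD_append _ _ _ _ (by simp only [List.length_replicate]; omega), getD_replicate, if_pos (by omega),
        if_pos h2]
    · rw [List.getD_append_right _ _ _ _ (by simp only [List.length_replicate]; omega), if_neg h2]
      simp only [List.length_replicate]
      rw [List.getD_eq_getElem?_getD, List.getD_eq_getElem?_getD, List.getElem?_drop]
      congr 2
      omega

lemma isStirling_insertBlock (m c p : ℕ) (w : List ℕ) (hp : p ≤ w.length)
    (hw : IsStirlingPerm w) (hlt : ∀ t, t < w.length → w.getD t 0 < m) :
    IsStirlingPerm (insertBlock m c p w) := by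
  intro i s j his hsj hj heq
  rw [length_insertBlock m c p w hp] at hj
  rw [getD_insertBlock m c p w hp i, getD_insertBlock m c p w hp j] at heq
  rw [getD_insertBlock m c p w hp i, getD_insertBlock m c p w hp s]
  split_ifs at heq ⊢
  all_goals first
  | omega
  | exact le_refl m
  | exact le_of_lt (hlt i (by omega))
  | exact le_of_lt (hlt (i - c) (by omega))
  | exact absurd heq (Nat.ne_of_lt (hlt i (by omega)))
  | exact absurd heq.symm (Nat.ne_of_lt (hlt j (by omega)))
  | exact absurd heq.symm (Nat.ne_of_lt (hlt (j - c) (by omega)))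
  | exact hw i s j his hsj (by omega) heq
  | exact hw i s (j - c) (by omega) (by omega) (by omega) heq
  | exact hw i (s - c) (j - c) (by omega) (by omega) (by omega) heq
  | exact hw (i - c) (s - c) (j - c) (by omega) (by omega) (by omega) heq

lemma isStirling_of_insertBlock (m c p : ℕ) (w : List ℕ) (hp : p ≤ w.length)
    (h : IsStirlingPerm (insertBlock m c p w)) : IsStirlingPerm w := by
  intro i s j his hsj hj heq
  have G := getD_insertBlock m c p w hp
  have L := length_insertBlock m c p w hp
  have key : ∀ t, t < w.length →
      (insertBlock m c p w).getD (if t < p then t else t + c) 0 = w.getD t 0 := by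
    intro t ht
    by_cases h' : t < p
    · rw [if_pos h', G t, if_pos h']
    · rw [if_neg h', G (t + c), if_neg (by omega), if_neg (by omega)]
      congr 2
      omega
  set ι := fun t => if t < p then t else t + c with hι
  have mono : ∀ a b : ℕ, a < b → ι a < ι b := by
    intro a b hab
    simp only [hι]
    split_ifs <;> omega
  have := h (ι i) (ι s) (ι j) (mono _ _ his) (mono _ _ hsj)
    (by simp only [hι]; rw [L]; split_ifs <;> omega)
    (by rw [show ι i = if i < p then i else i + c from rfl,
          show ι j = if j < p then j else j + c from rfl,
          key i (by omega), key j hj]; exact heq)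
  rwa [key i (by omega), key s (by omega)] at this

lemma count_eq_card_filter (l : List ℕ) (a : ℕ) :
    l.count a = ((Finset.range l.length).filter fun i => l.getD i 0 = a).card := by
  induction l with
  | nil => simp
  | cons x l ih =>
    rw [Finset.card_filter, List.length_cons, Finset.sum_range_succ']
    simp only [List.getD_cons_succ, List.getD_cons_zero]
    rw [← Finset.card_filter, ← ih, List.count_cons]
    by_cases hx : x = a <;> simp [hx]

lemma coe_insertBlock (m c p : ℕ) (w : List ℕ) :
    (↑(insertBlock m c p w) : Multiset ℕ) = Multiset.replicate c m + ↑w := by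
  conv_rhs => rw [← List.take_append_drop p w]
  rw [insertBlock, ← Multiset.coe_add, ← Multiset.coe_add, ← Multiset.coe_add,
    Multiset.coe_replicate]
  exact add_left_comm _ _ _

lemma getD_insertBlock_eq_m_iff (m c p : ℕ) (w : List ℕ) (hp : p ≤ w.length)
    (hm : m ∉ w) (hm0 : 0 < m) (t : ℕ) :
    (insertBlock m c p w).getD t 0 = m ↔ p ≤ t ∧ t < p + c := by
  rw [getD_insertBlock m c p w hp]
  split_ifs with h1 h2
  · constructor
    · intro h
      rw [List.getD_eq_getElem w 0 (by omega : t < w.length)] at h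
      exact absurd (h ▸ List.getElem_mem (l := w) (n := t) (by omega)) hm
    · omega
  · simp; omega
  · constructor
    · intro h
      by_cases hlen : t - c < w.length
      · rw [List.getD_eq_getElem w 0 hlen] at h
        exact absurd (h ▸ List.getElem_mem hlen) hm
      · rw [List.getD_eq_default _ _ (by omega)] at h
        omega
    · omega

lemma insertBlock_inj (m c : ℕ) (hc : 1 ≤ c) (hm0 : 0 < m) (p₁ p₂ : ℕ) (w₁ w₂ : List ℕ)
    (h₁ : p₁ ≤ w₁.length) (h₂ : p₂ ≤ w₂.length) (hm₁ : m ∉ w₁) (hm₂ : m ∉ w₂)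
    (he : insertBlock m c p₁ w₁ = insertBlock m c p₂ w₂) : p₁ = p₂ ∧ w₁ = w₂ := by
  have hp : p₁ = p₂ := by
    have a1 := (getD_insertBlock_eq_m_iff m c p₁ w₁ h₁ hm₁ hm0 p₁).2 (by omega)
    have a2 := (getD_insertBlock_eq_m_iff m c p₂ w₂ h₂ hm₂ hm0 p₂).2 (by omega)
    rw [he] at a1
    rw [← he] at a2
    have b1 := (getD_insertBlock_eq_m_iff m c p₂ w₂ h₂ hm₂ hm0 p₁).1 a1
    have b2 := (getD_insertBlock_eq_m_iff m c p₁ w₁ h₁ hm₁ hm0 p₂).1 a2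
    omega
  subst hp
  refine ⟨rfl, ?_⟩
  have ht : w₁.take p₁ = w₂.take p₁ := by
    have := congrArg (List.take p₁) he
    rwa [insertBlock, insertBlock, List.take_left' (by simp; omega),
      List.take_left' (by simp; omega)] at this
  have hd : w₁.drop p₁ = w₂.drop p₁ := by
    have := congrArg (List.drop (p₁ + c)) he
    rw [insertBlock, insertBlock, ← List.append_assoc, ← List.append_assoc,
      List.drop_left' (by simp; omega), List.drop_left' (by simp; omega)] at this
    exact this
  rw [← List.take_append_drop p₁ w₁, ← List.take_append_drop p₁ w₂, ht, hd]

lemma insertBlock_decomp (m c : ℕ) (w' : List ℕ) (hst : IsStirlingPerm w')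
    (hm : ∀ x ∈ w', x ≤ m) (hc : w'.count m = c) (hc1 : 1 ≤ c) :
    ∃ p w, p ≤ w.length ∧ m ∉ w ∧ w' = insertBlock m c p w := by
  classical
  set M := (Finset.range w'.length).filter (fun i => w'.getD i 0 = m) with hM
  have hcard : M.card = c := by rw [hM, ← count_eq_card_filter, hc]
  have hne : M.Nonempty := by
    rw [← Finset.card_pos, hcard]; omega
  set p := M.min' hne with hp
  set q := M.max' hne with hq
  have hpM : p ∈ M := M.min'_mem hne
  have hqM : q ∈ M := M.max'_mem hne
  have hplen : p < w'.length := (Finset.mem_filter.1 hpM).1 |> Finset.mem_range.1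
  have hqlen : q < w'.length := (Finset.mem_filter.1 hqM).1 |> Finset.mem_range.1
  have hpv : w'.getD p 0 = m := (Finset.mem_filter.1 hpM).2
  have hqv : w'.getD q 0 = m := (Finset.mem_filter.1 hqM).2
  have hMeq : M = Finset.Icc p q := by
    apply Finset.Subset.antisymm
    · intro t htM
      exact Finset.mem_Icc.2 ⟨M.min'_le t htM, M.le_max' t htM⟩
    · intro t htI
      rw [Finset.mem_Icc] at htI
      rcases eq_or_lt_of_le htI.1 with h | h
      · rwa [← h]
      rcases eq_or_lt_of_le htI.2 with h' | h'
      · rwa [h']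
      have hge : m ≤ w'.getD t 0 := hpv ▸ hst p t q h h' hqlen (hpv.trans hqv.symm)
      have hle : w'.getD t 0 ≤ m := by
        rw [List.getD_eq_getElem w' 0 (by omega : t < w'.length)]
        exact hm _ (List.getElem_mem _)
      exact Finset.mem_filter.2 ⟨Finset.mem_range.2 (by omega), le_antisymm hle hge⟩
  have hqp : q + 1 = p + c := by
    have := hcard
    rw [hMeq, Nat.card_Icc] at this
    omega
  have hchar : ∀ t, w'.getD t 0 = m → t < w'.length → (p ≤ t ∧ t < p + c) := by
    intro t h1 h2
    have : t ∈ M := Finset.mem_filter.2 ⟨Finset.mem_range.2 h2, h1⟩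
    rw [hMeq, Finset.mem_Icc] at this
    omega
  have hchar2 : ∀ t, p ≤ t → t < p + c → w'.getD t 0 = m := by
    intro t h1 h2
    have : t ∈ M := by rw [hMeq, Finset.mem_Icc]; omega
    exact (Finset.mem_filter.1 this).2
  have hpc : p + c ≤ w'.length := by omega
  refine ⟨p, w'.take p ++ w'.drop (p + c), by simp; omega, ?_, ?_⟩
  · intro hmem
    rw [List.mem_append] at hmem
    rcases hmem with h | h
    · rw [List.mem_iff_getElem] at h
      obtain ⟨t, ht, hv⟩ := h
      rw [List.length_take] at ht
      rw [List.getElem_take] at hv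
      have : w'.getD t 0 = m := by
        rw [List.getD_eq_getElem w' 0 (by omega)]; exact hv
      have := hchar t this (by omega)
      omega
    · rw [List.mem_iff_getElem] at h
      obtain ⟨t, ht, hv⟩ := h
      rw [List.length_drop] at ht
      rw [List.getElem_drop] at hv
      have : w'.getD (p + c + t) 0 = m := by
        rw [List.getD_eq_getElem w' 0 (by omega)]; exact hv
      have := hchar _ this (by omega)
      omega
  · have hblock : w'.drop p = List.replicate c m ++ w'.drop (p + c) := by
      have h1 : w'.drop p = (w'.drop p).take c ++ (w'.drop p).drop c := by
        rw [List.take_append_drop]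
      have h2 : (w'.drop p).drop c = w'.drop (p + c) := by
        rw [List.drop_drop]
      have h3 : (w'.drop p).take c = List.replicate c m := by
        rw [List.eq_replicate_iff]
        constructor
        · simp; omega
        · intro b hb
          rw [List.mem_iff_getElem] at hb
          obtain ⟨t, ht, hv⟩ := hb
          rw [List.length_take, List.length_drop] at ht
          rw [List.getElem_take, List.getElem_drop] at hv
          rw [← hv, ← List.getD_eq_getElem w' 0 (by omega)]
          exact hchar2 _ (by omega) (by omega)
      rw [← h2, ← h3, ← h1]
    rw [insertBlock, List.take_left' (by simp; omega), List.drop_left' (by simp; omega)]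
    conv_lhs => rw [← List.take_append_drop p w', hblock]

lemma mem_multisetOf_le {k : ℕ → ℕ} {n x : ℕ} (h : x ∈ multisetOf k n) : 1 ≤ x ∧ x ≤ n := by
  rw [multisetOf, Multiset.mem_sum] at h
  obtain ⟨i, hi, hx⟩ := h
  rw [Multiset.eq_of_mem_replicate hx]
  rw [Finset.mem_range] at hi
  omega

lemma card_multisetOf (k : ℕ → ℕ) (n : ℕ) :
    Multiset.card (multisetOf k n) = ∑ i ∈ Finset.range n, k i := by
  induction n with
  | zero => simp [multisetOf]
  | succ n ih =>
    rw [multisetOf, Finset.sum_range_succ, Multiset.card_add, ← multisetOf, ih,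
      Finset.sum_range_succ]
    simp

lemma count_multisetOf (k : ℕ → ℕ) (n : ℕ) :
    Multiset.count (n + 1) (multisetOf k (n + 1)) = k n := by
  rw [multisetOf, Finset.sum_range_succ, Multiset.count_add, Multiset.count_replicate,
    if_pos rfl]
  have : Multiset.count (n + 1) (multisetOf k n) = 0 := by
    rw [Multiset.count_eq_zero]
    intro h
    have := mem_multisetOf_le h
    omega
  rw [multisetOf] at this
  rw [this]
  omega

lemma step_card (k : ℕ → ℕ) (n : ℕ) (hkn : 1 ≤ k n) :
    Nat.card {w : List ℕ // (↑w : Multiset ℕ) = multisetOf k (n + 1) ∧ IsStirlingPerm w}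
      = ((∑ j ∈ Finset.range n, k j) + 1) *
        Nat.card {w : List ℕ // (↑w : Multiset ℕ) = multisetOf k n ∧ IsStirlingPerm w} := by
  classical
  set K := ∑ j ∈ Finset.range n, k j with hK
  set m := n + 1
  set c := k n
  have hnotmem : ∀ w : List ℕ, (↑w : Multiset ℕ) = multisetOf k n → m ∉ w := by
    intro w hw hmem
    have : m ∈ (↑w : Multiset ℕ) := hmem
    rw [hw] at this
    have := mem_multisetOf_le this
    omega
  have hlen : ∀ w : List ℕ, (↑w : Multiset ℕ) = multisetOf k n → w.length = K := by
    intro w hw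
    have : Multiset.card (↑w : Multiset ℕ) = w.length := Multiset.coe_card w
    rw [hw, card_multisetOf] at this
    omega
  have hmsum : multisetOf k (n + 1) = Multiset.replicate c m + multisetOf k n := by
    rw [multisetOf, Finset.sum_range_succ, add_comm]
    rfl
  let f : Fin (K + 1) × {w : List ℕ // (↑w : Multiset ℕ) = multisetOf k n ∧ IsStirlingPerm w}
      → {w : List ℕ // (↑w : Multiset ℕ) = multisetOf k (n + 1) ∧ IsStirlingPerm w} :=
    fun x => ⟨insertBlock m c x.1 x.2.1, by
      obtain ⟨p, w, hw1, hw2⟩ := x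
      have hp : (p : ℕ) ≤ w.length := by rw [hlen w hw1]; omega
      constructor
      · rw [coe_insertBlock, hw1, hmsum]
      · refine isStirling_insertBlock m c p w hp hw2 ?_
        intro t ht
        have : w.getD t 0 ∈ w := by
          rw [List.getD_eq_getElem w 0 ht]; exact List.getElem_mem ht
        have : w.getD t 0 ∈ (↑w : Multiset ℕ) := this
        rw [hw1] at this
        have := mem_multisetOf_le this
        omega⟩
  have hbij : Function.Bijective f := by
    constructor
    · rintro ⟨p₁, w₁, hw₁, hs₁⟩ ⟨p₂, w₂, hw₂, hs₂⟩ h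
      have := insertBlock_inj m c hkn (by omega) p₁ p₂ w₁ w₂
        (by rw [hlen w₁ hw₁]; omega) (by rw [hlen w₂ hw₂]; omega)
        (hnotmem w₁ hw₁) (hnotmem w₂ hw₂) (congrArg Subtype.val h)
      obtain ⟨hp, hw⟩ := this
      simp only [Prod.mk.injEq, Subtype.mk.injEq]
      exact ⟨Fin.ext hp, hw⟩
    · rintro ⟨w', hw', hs'⟩
      have hmle : ∀ x ∈ w', x ≤ m := by
        intro x hx
        have : x ∈ (↑w' : Multiset ℕ) := hx
        rw [hw'] at this
        exact (mem_multisetOf_le this).2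
      have hcount : w'.count m = c := by
        have := Multiset.coe_count m w'
        rw [hw', count_multisetOf] at this
        omega
      obtain ⟨p, w, hp, hmem, heq⟩ := insertBlock_decomp m c w' hs' hmle hcount hkn
      have hwm : (↑w : Multiset ℕ) = multisetOf k n := by
        have : (↑w' : Multiset ℕ) = Multiset.replicate c m + ↑w := by
          rw [heq, coe_insertBlock]
        rw [hw', hmsum] at this
        exact (add_left_cancel this).symm
      refine ⟨⟨⟨p, by rw [hlen w hwm] at hp; omega⟩, ⟨w, hwm,
        isStirling_of_insertBlock m c p w hp (heq ▸ hs')⟩⟩, ?_⟩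
      simp only [f]
      exact Subtype.ext heq.symm
  rw [Nat.card_congr (Equiv.ofBijective f hbij).symm, Nat.card_prod]
  congr 1
  simp

lemma stirling_aux (k : ℕ → ℕ) : ∀ n : ℕ, (∀ i < n, 1 ≤ k i) →
    Nat.card {w : List ℕ // (↑w : Multiset ℕ) = multisetOf k n ∧ IsStirlingPerm w} =
      ∏ i ∈ Finset.range (n - 1), ((∑ j ∈ Finset.range (i + 1), k j) + 1) := by
  intro n
  induction n with
  | zero =>
    intro _
    haveI : Unique {w : List ℕ // (↑w : Multiset ℕ) = multisetOf k 0 ∧ IsStirlingPerm w} :=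
      { default := ⟨[], by
          constructor
          · simp [multisetOf]
          · intro i s j _ _ h3 _
            simp at h3⟩
        uniq := by
          rintro ⟨w, hw, -⟩
          apply Subtype.ext
          simpa [multisetOf, Multiset.coe_eq_zero] using hw }
    rw [Nat.card_unique]
    simp
  | succ n ih =>
    intro hk
    rw [step_card k n (hk n (by omega)), ih (fun i hi => hk i (by omega))]
    cases n with
    | zero => simp
    | succ n' =>
      rw [Nat.succ_sub_one, Nat.succ_sub_one, Finset.prod_range_succ]
      ring

/-- The number of Stirling permutations of {1^{k_1},...,n^{k_n}} equals
∏_{i=1}^{n-1} (k_1 + ... + k_i + 1). -/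
theorem stirling_permutation_count (k : ℕ → ℕ) (n : ℕ) (hk : ∀ i < n, 1 ≤ k i) :
    Nat.card {w : List ℕ // (↑w : Multiset ℕ) = multisetOf k n ∧ IsStirlingPerm w} =
      ∏ i ∈ Finset.range (n - 1), ((∑ j ∈ Finset.range (i + 1), k j) + 1) :=
  stirling_aux k n hk
end

section
/- If k_n > 1, then for all positive integers m, B_k(m) = B_k(m-1) + B_{k'}(m), where k' = (k_1, ..., k_{n-1}, k_n - 1). -/
/-!
In a Stirling permutation whose largest letter is `n`, the `n`s form one contiguous block: a
smaller letter between two `n`s would violate the Stirling condition. Resizing that block (to any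
positive length) preserves the Stirling property and the number of descents, so decreasing `k_n`
leaves every `A_{k,i}` unchanged while `K` drops by one. The recursion is then Pascal's rule
`C(K+m-i, K) = C(K+m-1-i, K) + C(K-1+m-i, K-1)`, applied term by term.
-/

open Finset

open scoped List

namespace List

variable {α : Type*}

theorem append_cons_inj_of_notMem_left {a₁ a₂ t₁ t₂ : List α} {n : α} (h₁ : n ∉ a₁)
    (h₂ : n ∉ a₂) (h : a₁ ++ n :: t₁ = a₂ ++ n :: t₂) : a₁ = a₂ ∧ t₁ = t₂ := by
  induction a₁ generalizing a₂ with
  | nil =>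
    cases a₂ with
    | nil => exact ⟨rfl, (cons_inj_right n).mp h⟩
    | cons y a₂ => exact absurd (mem_cons.mpr (.inl (head_eq_of_cons_eq h))) h₂
  | cons x a ih =>
    cases a₂ with
    | nil => exact absurd (mem_cons.mpr (.inl (head_eq_of_cons_eq h).symm)) h₁
    | cons y a₂ =>
      simp only [cons_append, cons.injEq] at h
      obtain ⟨rfl, h⟩ := h
      obtain ⟨rfl, rfl⟩ := ih (fun hn => h₁ (mem_cons_of_mem x hn))
        (fun hn => h₂ (mem_cons_of_mem x hn)) h
      exact ⟨rfl, rfl⟩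

theorem append_replicate_append_inj {a₁ a₂ b₁ b₂ : List α} {n : α} {r : ℕ}
    (hr : r ≠ 0) (h₁ : n ∉ a₁) (h₂ : n ∉ a₂)
    (h : a₁ ++ replicate r n ++ b₁ = a₂ ++ replicate r n ++ b₂) : a₁ = a₂ ∧ b₁ = b₂ := by
  obtain ⟨s, rfl⟩ := Nat.exists_eq_succ_of_ne_zero hr
  simp only [replicate_succ, append_assoc, cons_append] at h
  obtain ⟨rfl, ht⟩ := append_cons_inj_of_notMem_left h₁ h₂ h
  exact ⟨rfl, append_cancel_left ht⟩

theorem exists_eq_replicate_append_of_sublist_cons {n : α} :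
    ∀ {l : List α}, (∀ y, [n, y, n] <+ n :: l → y = n) →
      ∃ s b, l = replicate s n ++ b ∧ n ∉ b
  | [], _ => ⟨0, [], rfl, not_mem_nil⟩
  | z :: l, h => by
    by_cases hz : z = n
    · subst hz
      obtain ⟨s, b, rfl, hb⟩ := exists_eq_replicate_append_of_sublist_cons
        fun y hy => h y (hy.trans (sublist_cons_self _ _))
      exact ⟨s + 1, b, rfl, hb⟩
    · refine ⟨0, z :: l, rfl, ?_⟩
      rintro (_ | ⟨_, hl⟩)
      · exact hz rfl
      · exact hz (h z (((singleton_sublist.mpr hl).cons_cons z).cons_cons n))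

theorem exists_eq_append_replicate_count_append [DecidableEq α] {n : α} :
    ∀ {l : List α}, (∀ y, [n, y, n] <+ l → y = n) →
      ∃ a b, l = a ++ replicate (l.count n) n ++ b ∧ n ∉ a ∧ n ∉ b
  | [], _ => ⟨[], [], rfl, not_mem_nil, not_mem_nil⟩
  | x :: l, h => by
    by_cases hx : x = n
    · subst hx
      obtain ⟨s, b, rfl, hb⟩ := exists_eq_replicate_append_of_sublist_cons h
      refine ⟨[], b, ?_, not_mem_nil, hb⟩
      simp [count_replicate_self, replicate_succ, count_eq_zero.mpr hb]
    · obtain ⟨a, b, hl, ha, hb⟩ := exists_eq_append_replicate_count_append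
        fun y hy => h y (hy.trans (sublist_cons_self _ _))
      refine ⟨x :: a, b, ?_, by simp [Ne.symm hx, ha], hb⟩
      rw [count_cons_of_ne hx, cons_append, cons_append, ← hl]

theorem eq_of_sublist_append_replicate_append {n y : α} {a b : List α} {r : ℕ} (ha : n ∉ a)
    (hb : n ∉ b) (h : [n, y, n] <+ a ++ replicate r n ++ b) : y = n := by
  obtain ⟨l₁, l₂, e, h₁, h₂⟩ := sublist_append_iff.mp h
  obtain ⟨l₃, l₄, rfl, h₃, h₄⟩ := sublist_append_iff.mp h₁
  obtain ⟨s, -, rfl⟩ := sublist_replicate_iff.mp h₄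
  have hl₃ : n ∉ l₃ := fun hn => ha (h₃.subset hn)
  have hl₂ : n ∉ l₂ := fun hn => hb (h₂.subset hn)
  rcases l₃ with _ | ⟨z, l₃⟩
  · rcases s with _ | _ | _ | s <;> simp [replicate_succ] at e <;> aesop
  · simp_all

end List

def descentCount : List ℕ → ℕ
  | [] => 0
  | [_] => 0
  | a :: b :: l => (if b < a then 1 else 0) + descentCount (b :: l)

theorem descents_eq_descentCount_add_one (w : List ℕ) : descents w = descentCount w + 1 := by
  rw [descents, add_left_inj]
  induction w with
  | nil => rfl
  | cons a t ih =>
    rcases t with _ | ⟨b, l⟩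
    · rfl
    · rw [descentCount, ← ih, Finset.card_filter, Finset.card_filter, List.length_cons,
        List.length_cons, Nat.add_sub_cancel, Nat.add_sub_cancel, Finset.sum_range_succ', add_comm]
      simp

theorem descentCount_append_cons_cons_self (l l' : List ℕ) (x : ℕ) :
    descentCount (l ++ x :: x :: l') = descentCount (l ++ x :: l') := by
  induction l with
  | nil => simp [descentCount]
  | cons y l ih =>
    rcases l with _ | ⟨z, l⟩
    · simp [descentCount]
    · simpa [descentCount] using ih

theorem descentCount_append_replicate_append (a b : List ℕ) (n : ℕ) {r : ℕ} (hr : r ≠ 0) :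
    descentCount (a ++ List.replicate r n ++ b) = descentCount (a ++ [n] ++ b) := by
  induction r with
  | zero => exact absurd rfl hr
  | succ r ih =>
    rcases r with _ | r
    · rfl
    · rw [← ih r.succ_ne_zero]
      simpa [List.replicate_succ] using
        descentCount_append_cons_cons_self a (List.replicate r n ++ b) n

theorem descents_append_replicate_append (a b : List ℕ) (n : ℕ) {r : ℕ} (hr : r ≠ 0) :
    descents (a ++ List.replicate r n ++ b) = descents (a ++ [n] ++ b) := by
  rw [descents_eq_descentCount_add_one, descents_eq_descentCount_add_one,
    descentCount_append_replicate_append a b n hr]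

theorem isStirlingPerm_iff_sublist (w : List ℕ) :
    IsStirlingPerm w ↔ ∀ x y, [x, y, x] <+ w → x ≤ y := by
  constructor
  · intro h x y hs
    obtain ⟨is, his, hp⟩ := List.sublist_eq_map_getElem hs
    rcases is with _ | ⟨i, _ | ⟨s, _ | ⟨j, _ | _⟩⟩⟩ <;> simp only [List.map_cons, List.map_nil,
      List.cons.injEq, reduceCtorEq, and_false, and_true] at his
    obtain ⟨rfl, rfl, hj⟩ := his
    simp only [List.pairwise_cons, List.mem_cons, List.not_mem_nil, forall_eq_or_imp] at hp
    have h' := h i s j hp.1.1 hp.2.1.1 j.isLt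
    rw [List.getD_eq_getElem _ _ i.isLt, List.getD_eq_getElem _ _ s.isLt,
      List.getD_eq_getElem _ _ j.isLt] at h'
    exact h' hj
  · intro h i s j his hsj hj heq
    have hsub : [w[i], w[s], w[j]] <+ w := by
      simpa using List.map_getElem_sublist (l := w)
        (is := [⟨i, by omega⟩, ⟨s, by omega⟩, ⟨j, hj⟩]) (by simp [his, hsj]; omega)
    simp only [List.getD_eq_getElem w 0 (show i < w.length by omega),
      List.getD_eq_getElem w 0 (show s < w.length by omega), List.getD_eq_getElem w 0 hj] at heq ⊢
    exact h _ _ (heq ▸ hsub)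

theorem isStirlingPerm_append_replicate_append_iff {a b : List ℕ} {n : ℕ} (r : ℕ)
    (ha : ∀ x ∈ a, x < n) (hb : ∀ x ∈ b, x < n) :
    IsStirlingPerm (a ++ List.replicate r n ++ b) ↔ IsStirlingPerm (a ++ b) := by
  simp only [isStirlingPerm_iff_sublist]
  have hsub : a ++ b <+ a ++ List.replicate r n ++ b :=
    (List.sublist_append_left a _).append_right b
  refine ⟨fun h x y hs => h x y (hs.trans hsub), fun h x y hs => ?_⟩
  by_contra! hyx
  have hxn : x ≤ n := by
    have hx : x ∈ a ++ List.replicate r n ++ b := hs.subset (by simp)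
    simp only [List.mem_append, List.mem_replicate] at hx
    rcases hx with (hx | ⟨-, rfl⟩) | hx
    exacts [(ha x hx).le, le_rfl, (hb x hx).le]
  rcases hxn.lt_or_eq with hxn | rfl
  · have hfilter : (a ++ List.replicate r n ++ b).filter (· ≠ n) = a ++ b := by
      have ha' : a.filter (· ≠ n) = a :=
        List.filter_eq_self.mpr fun x hx => by simpa using (ha x hx).ne
      have hb' : b.filter (· ≠ n) = b :=
        List.filter_eq_self.mpr fun x hx => by simpa using (hb x hx).ne
      rw [List.filter_append, List.filter_append, ha', hb', List.filter_replicate_of_neg (by simp),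
        List.append_nil]
    have hpat : [x, y, x].filter (· ≠ n) = [x, y, x] := by simp [hxn.ne, (hyx.trans hxn).ne]
    exact (h x y (hpat ▸ hfilter ▸ hs.filter _)).not_gt hyx
  · exact hyx.ne (List.eq_of_sublist_append_replicate_append (fun h => (ha x h).false)
      (fun h => (hb x h).false) hs)

theorem IsStirlingPerm.exists_eq_append_replicate_append {w : List ℕ} {n : ℕ}
    (hw : IsStirlingPerm w) (hn : ∀ x ∈ w, x ≤ n) :
    ∃ a b, w = a ++ List.replicate (w.count n) n ++ b ∧ (∀ x ∈ a, x < n) ∧ ∀ x ∈ b, x < n := by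
  obtain ⟨a, b, hab, ha, hb⟩ := List.exists_eq_append_replicate_count_append fun y hy =>
    le_antisymm (hn y (hy.subset (by simp))) ((isStirlingPerm_iff_sublist _).mp hw n y hy)
  refine ⟨a, b, hab, fun x hx => (hn x (by rw [hab]; simp [hx])).lt_of_ne ?_,
    fun x hx => (hn x (by rw [hab]; simp [hx])).lt_of_ne ?_⟩
  exacts [fun h => ha (h ▸ hx), fun h => hb (h ▸ hx)]

def StirlingPerms (M : Multiset ℕ) (i : ℕ) : Type :=
  {w : List ℕ // (w : Multiset ℕ) = M ∧ IsStirlingPerm w ∧ descents w = i}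

/-- A Stirling permutation of `M + {n, …, n}` with all letters of `M` below `n`, cut at its
block of `n`s. -/
def SplitStirlingPerms (M : Multiset ℕ) (n i : ℕ) : Type :=
  {p : List ℕ × List ℕ // (p.1 : Multiset ℕ) + p.2 = M ∧ IsStirlingPerm (p.1 ++ p.2) ∧
    descents (p.1 ++ [n] ++ p.2) = i}

theorem mem_stirlingPerms_append_replicate_append_iff {M : Multiset ℕ} {a b : List ℕ} {n r i : ℕ}
    (hr : r ≠ 0) (ha : ∀ x ∈ a, x < n) (hb : ∀ x ∈ b, x < n) :
    ((a ++ List.replicate r n ++ b : List ℕ) = M + Multiset.replicate r n ∧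
        IsStirlingPerm (a ++ List.replicate r n ++ b) ∧
        descents (a ++ List.replicate r n ++ b) = i) ↔
      ((a : Multiset ℕ) + b = M ∧ IsStirlingPerm (a ++ b) ∧ descents (a ++ [n] ++ b) = i) := by
  have hcoe : ((a ++ List.replicate r n ++ b : List ℕ) : Multiset ℕ) =
      (a + b : Multiset ℕ) + Multiset.replicate r n := by
    simp only [← Multiset.coe_add, ← Multiset.coe_replicate]
    abel
  rw [hcoe, add_left_inj, isStirlingPerm_append_replicate_append_iff r ha hb,
    descents_append_replicate_append a b n hr]

theorem card_stirlingPerms_add_replicate {M : Multiset ℕ} {n r : ℕ} (hM : ∀ x ∈ M, x < n)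
    (hr : r ≠ 0) (i : ℕ) :
    Nat.card (StirlingPerms (M + Multiset.replicate r n) i) =
      Nat.card (SplitStirlingPerms M n i) := by
  have hlt {a b : List ℕ} (hab : (a : Multiset ℕ) + b = M) :
      (∀ x ∈ a, x < n) ∧ ∀ x ∈ b, x < n := by
    subst hab
    exact ⟨fun x hx => hM x (by simp [hx]), fun x hx => hM x (by simp [hx])⟩
  let insertBlock (p : SplitStirlingPerms M n i) : StirlingPerms (M + Multiset.replicate r n) i :=
    ⟨p.1.1 ++ List.replicate r n ++ p.1.2,
      (mem_stirlingPerms_append_replicate_append_iff hr (hlt p.2.1).1 (hlt p.2.1).2).mpr p.2⟩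
  refine (Nat.card_eq_of_bijective insertBlock ⟨fun p q hpq => ?_, fun w => ?_⟩).symm
  · obtain ⟨ha, hb⟩ := List.append_replicate_append_inj hr (fun h => ((hlt p.2.1).1 n h).false)
      (fun h => ((hlt q.2.1).1 n h).false) (congrArg Subtype.val hpq)
    exact Subtype.ext (Prod.ext ha hb)
  · obtain ⟨w, hwM, hw, hwi⟩ := w
    have hwn : ∀ x ∈ w, x ≤ n := fun x hx => by
      have : x ∈ M + Multiset.replicate r n := hwM ▸ Multiset.mem_coe.mpr hx
      rcases Multiset.mem_add.mp this with h | h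
      exacts [(hM x h).le, (Multiset.eq_of_mem_replicate h).le]
    have hcount : w.count n = r := by
      rw [← Multiset.coe_count, hwM, Multiset.count_add, Multiset.count_replicate_self,
        Multiset.count_eq_zero.mpr fun h => (hM n h).false, zero_add]
    obtain ⟨a, b, hab, ha, hb⟩ := hw.exists_eq_append_replicate_append hwn
    rw [hcount] at hab
    subst hab
    exact ⟨⟨(a, b), (mem_stirlingPerms_append_replicate_append_iff hr ha hb).mp ⟨hwM, hw, hwi⟩⟩,
      rfl⟩

theorem multisetOf_update_last (k : ℕ → ℕ) (n r : ℕ) :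
    multisetOf (Function.update k n r) (n + 1) = multisetOf k n + Multiset.replicate r (n + 1) := by
  rw [multisetOf, Finset.sum_range_succ, Function.update_self]
  congr 1
  exact Finset.sum_congr rfl fun j hj =>
    by rw [Function.update_of_ne (Finset.mem_range.mp hj).ne]

theorem bigK_update_last (k : ℕ → ℕ) (n r : ℕ) :
    bigK (Function.update k n r) (n + 1) = bigK k n + r := by
  rw [bigK, Finset.sum_range_succ, Function.update_self]
  congr 1
  exact Finset.sum_congr rfl fun j hj =>
    by rw [Function.update_of_ne (Finset.mem_range.mp hj).ne]

theorem lt_of_mem_multisetOf {k : ℕ → ℕ} {n x : ℕ} (hx : x ∈ multisetOf k n) : x < n + 1 := by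
  obtain ⟨j, hj, hxj⟩ := Multiset.mem_sum.mp hx
  rw [Multiset.eq_of_mem_replicate hxj]
  exact Nat.succ_lt_succ (Finset.mem_range.mp hj)

theorem eulerianA_update_last (k : ℕ → ℕ) (n i : ℕ) {r : ℕ} (hr : r ≠ 0) (hk : k n ≠ 0) :
    eulerianA (Function.update k n r) (n + 1) i = eulerianA k (n + 1) i := by
  have hM : ∀ x ∈ multisetOf k n, x < n + 1 := fun _ => lt_of_mem_multisetOf
  calc eulerianA (Function.update k n r) (n + 1) i
      = Nat.card (StirlingPerms (multisetOf k n + Multiset.replicate r (n + 1)) i) := by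
        rw [← multisetOf_update_last]; rfl
    _ = Nat.card (StirlingPerms (multisetOf k n + Multiset.replicate (k n) (n + 1)) i) := by
        rw [card_stirlingPerms_add_replicate hM hr, card_stirlingPerms_add_replicate hM hk]
    _ = eulerianA k (n + 1) i := by
        rw [← multisetOf_update_last, Function.update_eq_self]; rfl

theorem choose_add_sub_eq_add {K m : ℕ} (hK : 2 ≤ K) (hm : 1 ≤ m) (i : ℕ) :
    (K + m - i).choose K = (K + (m - 1) - i).choose K + (K - 1 + m - i).choose (K - 1) := by
  obtain ⟨L, rfl⟩ := Nat.exists_eq_add_of_le' (hK.trans' one_le_two)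
  rcases le_or_gt i (L + m) with hi | hi
  · obtain ⟨j, hj⟩ : ∃ j, L + 1 + m - i = j + 1 := ⟨L + m - i, by omega⟩
    rw [hj, Nat.choose_succ_succ', add_comm, Nat.add_sub_cancel]
    congr 2 <;> omega
  · -- every term is `choose 0 _` with a positive lower index
    rw [show L + 1 + m - i = 0 by omega, show L + 1 + (m - 1) - i = 0 by omega,
      Nat.add_sub_cancel, show L + m - i = 0 by omega,
      Nat.choose_eq_zero_of_lt (n := 0) (k := L + 1) (by omega),
      Nat.choose_eq_zero_of_lt (n := 0) (k := L) (by omega)]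

theorem Bpoly_last_gt_one_general (k : ℕ → ℕ) (n m : ℕ)
    (hn : 1 ≤ n) (hm : 1 ≤ m) (hlast : 2 ≤ k (n - 1)) :
    Bpoly k n m =
      Bpoly k n (m - 1) + Bpoly (Function.update k (n - 1) (k (n - 1) - 1)) n m := by
  obtain ⟨n, rfl⟩ := Nat.exists_eq_add_of_le' hn
  rw [Nat.add_sub_cancel] at hlast ⊢
  have hK : bigK k (n + 1) = bigK k n + k n := by
    simpa using bigK_update_last k n (k n)
  have hK' := bigK_update_last k n (k n - 1)
  have hA (i : ℕ) : eulerianA (Function.update k n (k n - 1)) (n + 1) i = eulerianA k (n + 1) i :=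
    eulerianA_update_last k n i (by omega) (by omega)
  simp only [Bpoly, hA, ← Finset.sum_add_distrib, ← mul_add]
  refine Finset.sum_congr rfl fun i _ => ?_
  rw [choose_add_sub_eq_add (by omega) hm i, hK', hK,
    show bigK k n + k n - 1 = bigK k n + (k n - 1) by omega]

/-- If k_n > 1, then B_k(m) = B_k(m-1) + B_{k'}(m) where k' decrements the last entry. -/
theorem Bpoly_last_gt_one (k : ℕ → ℕ) (n m : ℕ) (hk : ∀ i < n, 1 ≤ k i)
    (hn : 1 ≤ n) (hm : 1 ≤ m) (hlast : 2 ≤ k (n - 1)) :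
    Bpoly k n m =
      Bpoly k n (m - 1) + Bpoly (Function.update k (n - 1) (k (n - 1) - 1)) n m :=
  Bpoly_last_gt_one_general k n m hn hm hlast
end

section
/- The reciprocity relation B_k(m) = (-1)^K b_k(-m) holds, where K = k_1 + ... + k_n. -/
open Finset

/-- The polynomial extension of B_k to integer arguments, over ℚ. -/
noncomputable def BpolyQ (k : ℕ → ℕ) (n : ℕ) (m : ℤ) : ℚ :=
  ∑ i ∈ Finset.Icc 1 n,
    (eulerianA k n i : ℚ) *
      ((∏ j ∈ Finset.range (bigK k n), ((m : ℚ) - i + 1 + j)) / (Nat.factorial (bigK k n)))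

/-- The polynomial extension of b_k to integer arguments, over ℚ:
b_k(m) = ∑_{i=K-n+1}^{K} A_{k,K+1-i} · C(K+m-i, K). -/
noncomputable def bpolyQ (k : ℕ → ℕ) (n : ℕ) (m : ℤ) : ℚ :=
  ∑ i ∈ Finset.Icc (bigK k n - n + 1) (bigK k n),
    (eulerianA k n (bigK k n + 1 - i) : ℚ) *
      ((∏ j ∈ Finset.range (bigK k n), ((m : ℚ) - i + 1 + j)) / (Nat.factorial (bigK k n)))

/-- Reciprocity: B_k(m) = (-1)^K b_k(-m). -/
theorem Bpoly_reciprocity (k : ℕ → ℕ) (n : ℕ) (hk : ∀ i < n, 1 ≤ k i) (hn : 1 ≤ n) :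
    ∀ m : ℤ, BpolyQ k n m = (-1) ^ (bigK k n) * bpolyQ k n (-m) := by
  intro m
  have hK : n ≤ bigK k n := by
    calc n = ∑ i ∈ Finset.range n, 1 := by simp
    _ ≤ ∑ i ∈ Finset.range n, k i := Finset.sum_le_sum (fun i hi => hk i (Finset.mem_range.mp hi))
    _ = bigK k n := rfl
  set K := bigK k n with hKdef
  rw [BpolyQ, bpolyQ, Finset.mul_sum]
  refine Finset.sum_nbij' (fun i => K + 1 - i) (fun i => K + 1 - i) ?_ ?_ ?_ ?_ ?_
  · intro a ha
    simp only [Finset.mem_Icc] at ha ⊢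
    omega
  · intro a ha
    simp only [Finset.mem_Icc] at ha ⊢
    omega
  · intro a ha
    simp only [Finset.mem_Icc] at ha
    show K + 1 - (K + 1 - a) = a
    omega
  · intro a ha
    simp only [Finset.mem_Icc] at ha
    show K + 1 - (K + 1 - a) = a
    omega
  · intro i hi
    simp only [Finset.mem_Icc] at hi
    have h1 : K + 1 - (K + 1 - i) = i := by omega
    rw [h1]
    have hcast : ((K + 1 - i : ℕ) : ℚ) = (K : ℚ) + 1 - (i : ℚ) := by
      have : i ≤ K + 1 := by omega
      push_cast [Nat.cast_sub this]
      ring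
    have hprod : (∏ j ∈ Finset.range K, (((-m : ℤ) : ℚ) - ((K + 1 - i : ℕ) : ℚ) + 1 + j))
        = (-1) ^ K * ∏ j ∈ Finset.range K, ((m : ℚ) - i + 1 + j) := by
      have step1 : (∏ j ∈ Finset.range K, (((-m : ℤ) : ℚ) - ((K + 1 - i : ℕ) : ℚ) + 1 + j))
          = ∏ j ∈ Finset.range K, (-1 * ((m : ℚ) - i + 1 + ((K - 1 - j : ℕ) : ℚ))) := by
        refine Finset.prod_congr rfl ?_
        intro j hj
        have hjK : j < K := Finset.mem_range.mp hj
        have hc2 : ((K - 1 - j : ℕ) : ℚ) = (K : ℚ) - 1 - (j : ℚ) := by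
          have h3 : j + 1 ≤ K := hjK
          push_cast [Nat.cast_sub (show 1 + j ≤ K by omega), Nat.sub_sub]
          ring
        rw [hcast, hc2]
        push_cast
        ring
      rw [step1, Finset.prod_mul_distrib, Finset.prod_const, Finset.card_range]
      congr 1
      exact Finset.prod_range_reflect (fun j => (m : ℚ) - i + 1 + j) K
    rw [hprod]
    have hone : ((-1 : ℚ) ^ K) * ((-1 : ℚ) ^ K) = 1 := by
      rw [← pow_add, ← two_mul, pow_mul]
      norm_num
    calc (eulerianA k n i : ℚ) * ((∏ j ∈ Finset.range K, ((m : ℚ) - i + 1 + j)) / (Nat.factorial K))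
        = (((-1 : ℚ) ^ K) * ((-1 : ℚ) ^ K)) * ((eulerianA k n i : ℚ) *
          ((∏ j ∈ Finset.range K, ((m : ℚ) - i + 1 + j)) / (Nat.factorial K))) := by
          rw [hone, one_mul]
      _ = (-1) ^ K * ((eulerianA k n i : ℚ) *
          ((-1) ^ K * (∏ j ∈ Finset.range K, ((m : ℚ) - i + 1 + j)) / (Nat.factorial K))) := by ring
end

section
/- For all nonnegative integers n and positive integers m, Σ_{1 ≤ i_1 ≤ i_2 ≤ ... ≤ i_n ≤ m} i_1² · i_2 · i_3 ⋯ i_n = S_odd(n + m, m), where S_odd satisfies S_odd(n,k) = S_odd(n-1,k-1) + k·S_odd(n-1,k) for n > k, S_odd(n,n) = n, S_odd(0,0) = 0, and S_odd(n,k) = 0 for n < k. -/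
/-- Stirling numbers of odd type of the second kind:
S_odd(n,k) = S_odd(n-1,k-1) + k·S_odd(n-1,k) + δ_{n,k}, S_odd(0,0) = 0,
S_odd(n,k) = 0 for n < k. -/
def Sodd : ℕ → ℕ → ℕ
  | 0, _ => 0
  | _ + 1, 0 => 0
  | n + 1, k + 1 => Sodd n k + (k + 1) * Sodd n (k + 1) + if n = k then 1 else 0

/-- Stirling numbers of odd type of the first kind:
s_odd(n,k) = s_odd(n-1,k-1) + (n-1)·s_odd(n-1,k) + δ_{n,k}, s_odd(0,0) = 0,
s_odd(n,k) = 0 for n < k. -/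
def sodd : ℕ → ℕ → ℕ
  | 0, _ => 0
  | n + 1, 0 => n * sodd n 0
  | n + 1, k + 1 => sodd n k + n * sodd n (k + 1) + if n = k then 1 else 0

open scoped Classical

lemma Sodd_eq_zero : ∀ {n k : ℕ}, n < k → Sodd n k = 0
  | 0, _, _ => rfl
  | n+1, 0, h => by omega
  | n+1, k+1, h => by
    have h1 : Sodd n k = 0 := Sodd_eq_zero (by omega)
    have h2 : Sodd n (k+1) = 0 := Sodd_eq_zero (by omega)
    have h3 : n ≠ k := by omega
    simp [Sodd, h1, h2, h3]

lemma Sodd_diag : ∀ n : ℕ, Sodd n n = n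
  | 0 => rfl
  | n+1 => by
    have h1 : Sodd n (n+1) = 0 := Sodd_eq_zero (by omega)
    simp [Sodd, Sodd_diag n, h1]

/-- Recursive form of the monotone-tuple sum. -/
def S : ℕ → ℕ → ℕ
  | 0, _ => 1
  | _+1, 0 => 0
  | n+1, m+1 => S (n+1) m + (m+1) ^ (if n = 0 then 2 else 1) * S n (m+1)
termination_by n m => n + m

lemma S_eq_Sodd : ∀ (n m : ℕ), S (n+1) m = Sodd (n+1+m) m
  | n, 0 => by simp [S, Sodd]
  | 0, m+1 => by
    rw [S, S_eq_Sodd 0 m]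
    have hS0 : S 0 (m+1) = 1 := by rw [S]
    rw [hS0]
    have e1 : 0+1+m = m+1 := by omega
    have e2 : 0+1+(m+1) = m+1+1 := by omega
    rw [e1, e2]
    have hne : m + 1 ≠ m := by omega
    rw [show Sodd (m+1+1) (m+1) =
        Sodd (m+1) m + (m+1) * Sodd (m+1) (m+1) + if m+1 = m then 1 else 0 from rfl]
    rw [Sodd_diag, if_neg hne]
    norm_num
    ring
  | n+1, m+1 => by
    rw [S, S_eq_Sodd (n+1) m, S_eq_Sodd n (m+1)]
    have e1 : n+1+1+(m+1) = (n+m+2)+1 := by omega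
    have e2 : n+1+1+m = n+m+2 := by omega
    have e3 : n+1+(m+1) = n+m+2 := by omega
    rw [e1, e2, e3]
    have hne : n + m + 2 ≠ m := by omega
    rw [show Sodd ((n+m+2)+1) (m+1) =
        Sodd (n+m+2) m + (m+1) * Sodd (n+m+2) (m+1) + if n+m+2 = m then 1 else 0 from rfl]
    rw [if_neg hne, if_neg (Nat.succ_ne_zero n), pow_one]
    ring
termination_by n m => n + m

/-- The weight of a tuple: first entry squared, others linear. -/
def wt {n m : ℕ} (f : Fin n → Fin m) : ℕ :=
  ∏ j : Fin n, ((f j : ℕ) + 1) ^ (if (j : ℕ) = 0 then 2 else 1)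

lemma snoc_mono {n m : ℕ} {g : Fin n → Fin (m+1)} (hg : Monotone g) :
    Monotone (Fin.snoc g (Fin.last m)) := by
  intro a b hab
  rcases Fin.eq_castSucc_or_eq_last b with ⟨jb, rfl⟩ | rfl
  · rcases Fin.eq_castSucc_or_eq_last a with ⟨ja, rfl⟩ | rfl
    · simp only [Fin.snoc_castSucc]
      exact hg (Fin.castSucc_le_castSucc_iff.mp hab)
    · exact absurd hab (not_le.mpr (Fin.castSucc_lt_last jb))
  · simp only [Fin.snoc_last]
    exact Fin.le_last _

/-- Peel off the last coordinate / top value. -/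
def peel (n m : ℕ) :
    {f : Fin (n+1) → Fin (m+1) // Monotone f} ≃
    ({f : Fin (n+1) → Fin m // Monotone f} ⊕ {f : Fin n → Fin (m+1) // Monotone f}) where
  toFun f :=
    if h : (f.1 (Fin.last n) : ℕ) < m then
      Sum.inl ⟨fun j => ⟨(f.1 j : ℕ), lt_of_le_of_lt (f.2 (Fin.le_last j)) h⟩,
        fun a b hab => f.2 hab⟩
    else
      Sum.inr ⟨fun j => f.1 j.castSucc, f.2.comp Fin.strictMono_castSucc.monotone⟩
  invFun x :=
    match x with
    | Sum.inl g => ⟨fun j => (g.1 j).castSucc, fun a b hab => g.2 hab⟩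
    | Sum.inr g => ⟨Fin.snoc g.1 (Fin.last m), snoc_mono g.2⟩
  left_inv f := by
    by_cases h : (f.1 (Fin.last n) : ℕ) < m
    · dsimp only
      rw [dif_pos h]
      exact Subtype.ext (funext fun j => Fin.ext rfl)
    · dsimp only
      rw [dif_neg h]
      apply Subtype.ext
      funext j
      rcases Fin.eq_castSucc_or_eq_last j with ⟨j', rfl⟩ | rfl
      · simp only [Fin.snoc_castSucc]
      · simp only [Fin.snoc_last]
        have hle : (f.1 (Fin.last n) : ℕ) ≤ m := Nat.lt_succ_iff.mp (f.1 (Fin.last n)).isLt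
        have hv : (f.1 (Fin.last n) : ℕ) = m := by omega
        exact Fin.ext (by simpa [Fin.val_last] using hv.symm)
  right_inv x := by
    rcases x with g | g
    · dsimp only
      split_ifs with h
      · exact congrArg Sum.inl (Subtype.ext (funext fun j => Fin.ext rfl))
      · exact absurd (g.1 (Fin.last n)).isLt h
    · dsimp only
      split_ifs with h
      · exfalso
        simp [Fin.snoc_last] at h
      · exact congrArg Sum.inr (Subtype.ext (funext fun j => by simp [Fin.snoc_castSucc]))

lemma wt_snoc {n m : ℕ} (g : Fin n → Fin (m+1)) :
    wt (Fin.snoc g (Fin.last m)) = (m+1) ^ (if n = 0 then 2 else 1) * wt g := by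
  unfold wt
  rw [Fin.prod_univ_castSucc]
  simp only [Fin.snoc_castSucc, Fin.snoc_last, Fin.coe_castSucc, Fin.val_last]
  rw [mul_comm]

lemma key (n m : ℕ) :
    ∑ f : {f : Fin (n+1) → Fin (m+1) // Monotone f}, wt f.1 =
    (∑ f : {f : Fin (n+1) → Fin m // Monotone f}, wt f.1) +
    (m+1) ^ (if n = 0 then 2 else 1) *
      ∑ f : {f : Fin n → Fin (m+1) // Monotone f}, wt f.1 := by
  have h1 : ∀ g : {f : Fin (n+1) → Fin m // Monotone f},
      wt (((peel n m).symm (Sum.inl g)).1) = wt g.1 := by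
    intro g
    show wt (fun j => ((g.1 j).castSucc : Fin (m+1))) = wt g.1
    unfold wt
    simp
  have h2 : ∀ g : {f : Fin n → Fin (m+1) // Monotone f},
      wt (((peel n m).symm (Sum.inr g)).1) =
        (m+1) ^ (if n = 0 then 2 else 1) * wt g.1 := by
    intro g
    show wt (Fin.snoc g.1 (Fin.last m)) = _
    exact wt_snoc g.1
  rw [← Equiv.sum_comp (peel n m).symm (fun f => wt f.1), Fintype.sum_sum_type]
  rw [Finset.sum_congr rfl (fun g _ => h1 g), Finset.sum_congr rfl (fun g _ => h2 g),
    ← Finset.mul_sum]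

lemma W_eq_S : ∀ (n m : ℕ),
    (∑ f : {f : Fin n → Fin m // Monotone f}, wt f.1) = S n m
  | 0, m => by
    haveI : Unique {f : Fin 0 → Fin m // Monotone f} :=
      ⟨⟨⟨Fin.elim0, fun a => a.elim0⟩⟩, fun f => Subtype.ext (funext fun i => i.elim0)⟩
    rw [Fintype.sum_unique]
    simp [wt, S]
  | n+1, 0 => by
    haveI : IsEmpty {f : Fin (n+1) → Fin 0 // Monotone f} := ⟨fun f => (f.1 0).elim0⟩
    rw [Finset.univ_eq_empty, Finset.sum_empty]
    simp [S]
  | n+1, m+1 => by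
    rw [key, W_eq_S (n+1) m, W_eq_S n (m+1), S]
termination_by n m => n + m

/-- ∑_{1 ≤ i_1 ≤ ... ≤ i_n ≤ m} i_1² i_2 ⋯ i_n = S_odd(n+m, m). -/
theorem sum_monotone_eq_Sodd (n m : ℕ) (hn : 1 ≤ n) (hm : 1 ≤ m) :
    ∑ f : {f : Fin n → Fin m // Monotone f},
      ∏ j : Fin n, ((f.1 j : ℕ) + 1) ^ (if (j : ℕ) = 0 then 2 else 1) =
    Sodd (n + m) m := by
  obtain ⟨n', rfl⟩ : ∃ n', n = n' + 1 := ⟨n - 1, by omega⟩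
  have h := W_eq_S (n'+1) m
  simp only [wt] at h
  exact h.trans (S_eq_Sodd n' m)
end

section
/- S_odd(n, k) equals the number of pairs (ℓ, π) where π is a partition of {1,...,n} into k blocks B_1,...,B_k with min(B_1) < ... < min(B_k), and ℓ ∈ {1,...,n} satisfies min(B_ℓ) = ℓ. -/
/-!
Since the block minima are distinct positive integers, the `ℓ`-th smallest of them is at least
`ℓ`, with equality exactly when `1, …, ℓ` are all block minima. Call such `ℓ` a leader. For
`ℓ ≤ n`, a partition of `{1, …, n + 1}` arises from one of `{1, …, n}` by putting `n + 1` either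
into a new singleton block or into one of the existing blocks; being larger than everything else,
`n + 1` does not change whether `1, …, ℓ` are block minima. Hence the number `L(n, ℓ, k)` of
partitions into `k` blocks with leader `ℓ` satisfies the Stirling recurrence
`L(n + 1, ℓ, k + 1) = L(n, ℓ, k) + (k + 1) L(n, ℓ, k + 1)`. The remaining leader `ℓ = n + 1`
forces the discrete partition and contributes `δ_{n+1,k+1}`, so `∑ ℓ, L(n, ℓ, k)` satisfies the
recurrence defining `S_odd`.
-/

open Finset

theorem Nat.nth_eq_self_iff {p : ℕ → Prop} {n : ℕ} (hn : n ≠ 0) :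
    Nat.nth p n = n ↔ ∀ m ≤ n, p m := by
  classical
  refine ⟨fun h m hm => ?_, Nat.nth_of_forall⟩
  have hlt : ∀ hf : (Set.ofPred p).Finite, n < #hf.toFinset :=
    Nat.lt_card_toFinset_of_nth_ne_zero (by rwa [h])
  rcases hm.lt_or_eq with hm | rfl
  · have hcount : Nat.count p n = n := by simpa [h] using Nat.count_nth hlt
    exact Nat.count_iff_forall.1 hcount m hm
  · simpa [h] using Nat.nth_mem m hlt

theorem Finset.getD_sort_sub_one_eq_self_iff {N : Finset ℕ} (h0 : 0 ∉ N) {ℓ : ℕ} (hℓ : ℓ ≠ 0) :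
    (N.sort (· ≤ ·)).getD (ℓ - 1) 0 = ℓ ↔ Icc 1 ℓ ⊆ N := by
  obtain ⟨m, rfl⟩ := Nat.exists_eq_add_one_of_ne_zero hℓ
  -- after prepending `0`, the `m`-th element of `N` is `Nat.nth (· ∈ insert 0 N) (m + 1)`
  have hsort : (insert 0 N).sort (· ≤ ·) = 0 :: N.sort (· ≤ ·) :=
    sort_insert _ (fun b _ => Nat.zero_le b) h0
  have hfin : (Set.ofPred (· ∈ insert 0 N)).Finite := (insert 0 N).finite_toSet
  have hfin_toFinset : hfin.toFinset = insert 0 N := by ext; simp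
  rw [Nat.add_sub_cancel, ← List.getD_cons_succ, ← hsort, ← hfin_toFinset,
    ← Nat.nth_eq_getD_sort, Nat.nth_eq_self_iff (Nat.succ_ne_zero m)]
  simp only [subset_iff, mem_insert, mem_Icc]
  constructor
  · intro h x hx
    exact (h x hx.2).resolve_left (by omega)
  · intro h x hx
    rcases Nat.eq_zero_or_pos x with hx0 | hx0
    · exact Or.inl hx0
    · exact Or.inr (h ⟨hx0, hx⟩)

theorem WithTop.getD_sort_sub_one_eq_natCast_iff {M : Finset (WithTop ℕ)}
    (hM : ∀ x ∈ M, x ≠ ⊤ ∧ x ≠ 0) {ℓ : ℕ} (hℓ : ℓ ≠ 0) :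
    (M.sort (· ≤ ·)).getD (ℓ - 1) ⊥ = ℓ ↔ ∀ i ∈ Icc 1 ℓ, (i : WithTop ℕ) ∈ M := by
  set N := M.preimage WithTop.some WithTop.coe_injective.injOn
  have hMN : M = N.map Function.Embedding.coeWithTop := by
    ext x
    induction x with
    | top => simpa using fun h => (hM ⊤ h).1 rfl
    | coe x => simp [N]
  have h0 : 0 ∉ N := fun h => (hM _ (mem_preimage.1 h)).2 rfl
  rw [hMN, ← StrictMonoOn.map_finsetSort (f := Function.Embedding.coeWithTop) (s := N)
      (WithTop.coe_strictMono.strictMonoOn _),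
    show (⊥ : WithTop ℕ) = Function.Embedding.coeWithTop 0 from rfl, List.getD_map,
    Function.Embedding.coeWithTop_apply, Nat.cast_withTop, WithTop.coe_inj,
    getD_sort_sub_one_eq_self_iff h0 hℓ]
  simp [subset_iff]

namespace Finpartition

section Insert

variable {α : Type*} [DecidableEq α] {s t : Finset α} {a : α} (P : Finpartition s)

lemma subset_of_mem_insert_empty_parts (ht : t ∈ insert ∅ P.parts) : t ⊆ s := by
  rcases mem_insert.1 ht with rfl | ht
  · exact empty_subset s
  · exact P.le ht

lemma disjoint_of_mem_insert_empty_parts (ht : t ∈ insert ∅ P.parts) {u : Finset α}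
    (hu : u ∈ P.parts) (hut : u ≠ t) : Disjoint u t := by
  rcases mem_insert.1 ht with rfl | ht
  · exact disjoint_empty_right u
  · exact P.disjoint hu ht hut

lemma parts_avoid_of_mem_insert_empty_parts (ht : t ∈ insert ∅ P.parts) :
    (P.avoid t).parts = P.parts.erase t := by
  ext u
  rw [mem_avoid, mem_erase]
  constructor
  · rintro ⟨d, hd, hdt, rfl⟩
    have hne : d ≠ t := by rintro rfl; exact hdt le_rfl
    rw [(P.disjoint_of_mem_insert_empty_parts ht hd hne).sdiff_eq_left]
    exact ⟨hne, hd⟩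
  · rintro ⟨hut, hu⟩
    have hdisj := P.disjoint_of_mem_insert_empty_parts ht hu hut
    exact ⟨u, hu, fun h => P.ne_bot hu (hdisj.eq_bot_of_le h), hdisj.sdiff_eq_left⟩

lemma erase_empty_insert_erase_parts (ht : t ∈ insert ∅ P.parts) :
    (insert t (P.parts.erase t)).erase ∅ = P.parts := by
  rcases mem_insert.1 ht with rfl | ht
  · rw [erase_insert (notMem_erase ∅ _), erase_eq_of_notMem P.empty_notMem_parts]
  · rw [insert_erase ht, erase_eq_of_notMem P.empty_notMem_parts]

/-- Puts `a` into the part `t` of `P`; the choice `t = ∅` makes `{a}` a new part. -/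
def insertInto (ha : a ∉ s) (t : Finset α) (ht : t ∈ insert ∅ P.parts) :
    Finpartition (insert a s) :=
  (P.avoid t).extend (b := insert a t) (insert_ne_empty a t)
    (disjoint_insert_right.2 ⟨fun h => ha (mem_sdiff.1 h).1, sdiff_disjoint⟩)
    (by
      rw [sup_eq_union, union_insert,
        sdiff_union_of_subset (P.subset_of_mem_insert_empty_parts ht)])

variable {P}

lemma parts_insertInto (ha : a ∉ s) (ht : t ∈ insert ∅ P.parts) :
    (P.insertInto ha t ht).parts = insert (insert a t) (P.parts.erase t) := by
  rw [insertInto, extend_parts, parts_avoid_of_mem_insert_empty_parts P ht]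

lemma part_insertInto (ha : a ∉ s) (ht : t ∈ insert ∅ P.parts) :
    (P.insertInto ha t ht).part a = insert a t :=
  part_eq_of_mem _ (by rw [parts_insertInto]; exact mem_insert_self _ _) (mem_insert_self a t)

lemma insert_notMem_parts (ha : a ∉ s) (t : Finset α) : insert a t ∉ P.parts :=
  fun h => ha (P.le h (mem_insert_self a t))

lemma card_parts_insertInto (ha : a ∉ s) (ht : t ∈ insert ∅ P.parts) :
    #(P.insertInto ha t ht).parts = #P.parts + if t = ∅ then 1 else 0 := by
  rw [parts_insertInto,
    card_insert_of_notMem fun h => insert_notMem_parts ha t (mem_of_mem_erase h)]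
  split_ifs with h
  · rw [h, erase_eq_of_notMem P.empty_notMem_parts]
  · rw [add_zero, card_erase_add_one ((mem_insert.1 ht).resolve_left h)]

lemma parts_restrict_subset_insert (ha : a ∉ s) (ρ : Finpartition (insert a s)) :
    (ρ.restrict (subset_insert a s)).parts =
      (insert ((ρ.part a).erase a) (ρ.parts.erase (ρ.part a))).erase ∅ := by
  have hpart : ρ.part a ∈ ρ.parts := ρ.part_mem.2 (mem_insert_self a s)
  have hinter : ∀ u ∈ ρ.parts, u ⊓ s = u.erase a := fun u hu => by
    ext x
    simp only [inf_eq_inter, mem_inter, mem_erase]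
    constructor
    · rintro ⟨hxu, hxs⟩; exact ⟨fun h => ha (h ▸ hxs), hxu⟩
    · rintro ⟨hxa, hxu⟩; exact ⟨hxu, (mem_insert.1 (ρ.le hu hxu)).resolve_left hxa⟩
  show (ρ.parts.image (· ⊓ s)).erase ⊥ = _
  rw [image_congr hinter, ← insert_erase hpart, image_insert, insert_erase hpart, bot_eq_empty]
  congr 2
  refine (image_congr fun u hu => ?_).trans image_id
  rw [mem_coe, mem_erase] at hu
  exact erase_eq_of_notMem fun hau => hu.1 (ρ.part_eq_of_mem hu.2 hau).symm

lemma erase_part_notMem_erase_parts (ρ : Finpartition (insert a s)) :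
    (ρ.part a).erase a ∉ ρ.parts.erase (ρ.part a) := by
  intro h
  obtain ⟨hne, hmem⟩ := mem_erase.1 h
  obtain ⟨x, hx⟩ := ρ.nonempty_of_mem_parts hmem
  exact hne (ρ.eq_of_mem_parts hmem (ρ.part_mem.2 (mem_insert_self a s)) hx (mem_of_mem_erase hx))

lemma erase_part_mem_insert_empty_parts_restrict (ha : a ∉ s) (ρ : Finpartition (insert a s)) :
    (ρ.part a).erase a ∈ insert ∅ (ρ.restrict (subset_insert a s)).parts := by
  rw [parts_restrict_subset_insert ha, mem_insert, mem_erase]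
  by_cases h : (ρ.part a).erase a = ∅
  · exact Or.inl h
  · exact Or.inr ⟨h, mem_insert_self _ _⟩

def insertEquiv (ha : a ∉ s) :
    (Σ P : Finpartition s, (insert ∅ P.parts : Finset (Finset α))) ≃
      Finpartition (insert a s) where
  toFun x := x.1.insertInto ha x.2 x.2.2
  invFun ρ := ⟨ρ.restrict (subset_insert a s), (ρ.part a).erase a,
    erase_part_mem_insert_empty_parts_restrict ha ρ⟩
  left_inv := by
    rintro ⟨P, t, ht⟩
    have hat : a ∉ t := fun h => ha (P.subset_of_mem_insert_empty_parts ht h)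
    refine Sigma.subtype_ext (Finpartition.ext ?_) ?_
    · rw [parts_restrict_subset_insert ha, part_insertInto, erase_insert hat, parts_insertInto,
        erase_insert fun h => insert_notMem_parts ha t (mem_of_mem_erase h),
        erase_empty_insert_erase_parts P ht]
    · exact (congrArg (Finset.erase · a) (part_insertInto ha ht)).trans (erase_insert hat)
  right_inv ρ := by
    refine Finpartition.ext ?_
    dsimp only
    rw [parts_insertInto, parts_restrict_subset_insert ha,
      insert_erase (ρ.mem_part_self.2 (mem_insert_self a s)), erase_right_comm,
      erase_insert (erase_part_notMem_erase_parts ρ),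
      erase_eq_of_notMem fun h => ρ.empty_notMem_parts (mem_of_mem_erase h),
      insert_erase (ρ.part_mem.2 (mem_insert_self a s))]

end Insert

section LinearOrder

variable {α : Type*} [LinearOrder α] {s t : Finset α} {a : α} {P : Finpartition s}

lemma image_min_parts_insertInto (ha : a ∉ s) (hlt : ∀ x ∈ s, x < a)
    (ht : t ∈ insert ∅ P.parts) :
    (P.insertInto ha t ht).parts.image Finset.min =
      if t = ∅ then insert ↑a (P.parts.image Finset.min) else P.parts.image Finset.min := by
  rw [parts_insertInto, image_insert]
  split_ifs with h
  · rw [h, insert_empty, min_singleton, erase_eq_of_notMem P.empty_notMem_parts]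
  · have ht' : t ∈ P.parts := (mem_insert.1 ht).resolve_left h
    obtain ⟨m, hm⟩ := min_of_nonempty (P.nonempty_of_mem_parts ht')
    have hmin : (insert a t).min = t.min := by
      rw [min_insert, hm,
        min_eq_right (WithTop.coe_le_coe.2 (hlt m (P.le ht' (mem_of_min hm))).le)]
    rw [hmin, ← image_insert, insert_erase ht']

lemma eq_bot_of_forall_mem_image_min
    (h : ∀ x ∈ s, (x : WithTop α) ∈ P.parts.image Finset.min) : P = ⊥ := by
  refine le_antisymm (fun u hu => ?_) bot_le
  have hne := P.nonempty_of_mem_parts hu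
  refine ⟨{u.min' hne}, mem_bot_iff.2 ⟨_, P.le hu (min'_mem u hne), rfl⟩, fun y hy => ?_⟩
  obtain ⟨v, hv, hvy⟩ := mem_image.1 (h y (P.le hu hy))
  obtain rfl : v = u := P.eq_of_mem_parts hv hu (mem_of_min hvy) hy
  rw [mem_singleton, ← WithTop.coe_inj, coe_min', hvy]

end LinearOrder

variable {s : Finset ℕ}

/-- Equivalent to `min B_ℓ = ℓ` for the blocks ordered by their minima, see
`getD_sort_image_min_eq_iff_isLeader`. -/
def IsLeader (P : Finpartition s) (ℓ : ℕ) : Prop :=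
  ∀ i ∈ Icc 1 ℓ, (i : WithTop ℕ) ∈ P.parts.image Finset.min

instance (P : Finpartition s) (ℓ : ℕ) : Decidable (P.IsLeader ℓ) :=
  inferInstanceAs (Decidable (∀ i ∈ Icc 1 ℓ, _))

lemma isLeader_insertInto_iff {a ℓ : ℕ} {t : Finset ℕ} {P : Finpartition s} (ha : a ∉ s)
    (hlt : ∀ x ∈ s, x < a) (hℓ : ℓ < a) (ht : t ∈ insert ∅ P.parts) :
    (P.insertInto ha t ht).IsLeader ℓ ↔ P.IsLeader ℓ := by
  unfold IsLeader
  rw [image_min_parts_insertInto ha hlt ht]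
  split_ifs
  · refine forall₂_congr fun i hi => ?_
    have : i ≠ a := by have := (mem_Icc.1 hi).2; omega
    rw [mem_insert, Nat.cast_withTop, WithTop.coe_inj, or_iff_right this]
  · rfl

lemma getD_sort_image_min_eq_iff_isLeader (P : Finpartition s) (hs : 0 ∉ s) {ℓ : ℕ}
    (hℓ : ℓ ≠ 0) :
    ((P.parts.image Finset.min).sort (· ≤ ·)).getD (ℓ - 1) ⊥ = ℓ ↔ P.IsLeader ℓ := by
  refine WithTop.getD_sort_sub_one_eq_natCast_iff (fun x hx => ?_) hℓ
  obtain ⟨u, hu, rfl⟩ := mem_image.1 hx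
  exact ⟨fun h => P.ne_empty hu (min_eq_top.1 h), fun h => hs (P.le hu (mem_of_min h))⟩

lemma isLeader_bot (n : ℕ) : (⊥ : Finpartition (Icc 1 n)).IsLeader n :=
  fun i hi => mem_image.2 ⟨{i}, mem_bot_iff.2 ⟨i, hi, rfl⟩, min_singleton⟩

end Finpartition

def leaderCount (s : Finset ℕ) (ℓ k : ℕ) : ℕ :=
  #{P : Finpartition s | #P.parts = k ∧ P.IsLeader ℓ}

lemma leaderCount_zero_right {s : Finset ℕ} (hs : s.Nonempty) (ℓ : ℕ) :
    leaderCount s ℓ 0 = 0 := by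
  refine card_eq_zero.2 (filter_eq_empty_iff.2 fun P _ h => hs.ne_empty ?_)
  rw [← bot_eq_empty, ← Finpartition.parts_eq_empty_iff, ← card_eq_zero]
  exact h.1

lemma leaderCount_Icc_self (n k : ℕ) :
    leaderCount (Icc 1 n) n k = if n = k then 1 else 0 := by
  have hiff : ∀ P : Finpartition (Icc 1 n), #P.parts = k ∧ P.IsLeader n ↔ P = ⊥ ∧ n = k := by
    intro P
    constructor
    · rintro ⟨hk, hP⟩
      obtain rfl := P.eq_bot_of_forall_mem_image_min hP
      simpa using hk
    · rintro ⟨rfl, rfl⟩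
      exact ⟨by simp, Finpartition.isLeader_bot n⟩
  rw [leaderCount, filter_congr fun P _ => hiff P]
  split_ifs with h <;> simp [h, filter_eq']

lemma leaderCount_insert {s : Finset ℕ} {a ℓ : ℕ} (ha : a ∉ s) (hlt : ∀ x ∈ s, x < a)
    (hℓ : ℓ < a) (k : ℕ) :
    leaderCount (insert a s) ℓ (k + 1) =
      leaderCount s ℓ k + (k + 1) * leaderCount s ℓ (k + 1) := by
  simp only [leaderCount, card_filter]
  rw [← (Finpartition.insertEquiv ha).sum_comp, Fintype.sum_sigma]
  simp only [Finpartition.insertEquiv, Equiv.coe_fn_mk, Finpartition.card_parts_insertInto,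
    Finpartition.isLeader_insertInto_iff ha hlt hℓ]
  rw [mul_sum, ← sum_add_distrib]
  refine sum_congr rfl fun P _ => ?_
  rw [sum_coe_sort (insert ∅ P.parts) fun t =>
      if (#P.parts + if t = ∅ then 1 else 0) = k + 1 ∧ P.IsLeader ℓ then 1 else 0,
    sum_insert P.empty_notMem_parts, sum_congr rfl fun t ht => by rw [if_neg (P.ne_empty ht)],
    sum_const, smul_eq_mul]
  simp only [if_pos, add_zero, Nat.add_right_cancel_iff]
  by_cases hP : #P.parts = k + 1
  · rw [hP]
  · simp [hP]

theorem sum_leaderCount_Icc (n k : ℕ) : ∑ ℓ ∈ Icc 1 n, leaderCount (Icc 1 n) ℓ k = Sodd n k := by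
  induction n generalizing k with
  | zero => simp [Sodd]
  | succ n ih =>
    cases k with
    | zero =>
      simp [leaderCount_zero_right (nonempty_Icc.2 (Nat.le_add_left 1 n)), Sodd]
    | succ k =>
      have hIcc : Icc 1 (n + 1) = insert (n + 1) (Icc 1 n) := by
        rw [insert_Icc_right_eq_Icc_add_one (Nat.le_add_left 1 n)]
      rw [sum_Icc_succ_top (Nat.le_add_left 1 n), leaderCount_Icc_self, hIcc,
        sum_congr rfl fun ℓ hℓ => leaderCount_insert (by simp)
          (fun x hx => by simp at hx; omega) (by simp at hℓ; omega) k,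
        sum_add_distrib, ← mul_sum, ih, ih]
      simp [Sodd]

/-- S_odd(n,k) counts partitions with leader: pairs (ℓ, π) where π is a partition of
{1,...,n} into k blocks B_1,...,B_k ordered by their minima, and ℓ ∈ {1,...,n} with
min(B_ℓ) = ℓ (i.e. the ℓ-th smallest block minimum equals ℓ). -/
theorem Sodd_eq_partitions_with_leader (n k : ℕ) :
    Nat.card {p : ℕ × Finpartition (Finset.Icc 1 n) //
      1 ≤ p.1 ∧ p.1 ≤ n ∧ p.2.parts.card = k ∧
      ((p.2.parts.image Finset.min).sort (· ≤ ·)).getD (p.1 - 1) ⊥ = (p.1 : WithBot ℕ)} =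
    Sodd n k := by
  have hmem : ∀ p : ℕ × Finpartition (Icc 1 n), (1 ≤ p.1 ∧ p.1 ≤ n ∧ #p.2.parts = k ∧
      ((p.2.parts.image Finset.min).sort (· ≤ ·)).getD (p.1 - 1) ⊥ = (p.1 : WithBot ℕ)) ↔
      p ∈ {p ∈ Icc 1 n ×ˢ (univ : Finset (Finpartition (Icc 1 n))) |
        #p.2.parts = k ∧ p.2.IsLeader p.1} := by
    rintro ⟨ℓ, P⟩
    simp only [mem_filter, mem_product, mem_Icc, mem_univ, and_true, and_assoc]
    refine and_congr_right fun hℓ => and_congr_right' <| and_congr_right' ?_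
    exact P.getD_sort_image_min_eq_iff_isLeader (by simp) (Nat.one_le_iff_ne_zero.1 hℓ)
  rw [Nat.card_congr (Equiv.subtypeEquivRight hmem), Nat.card_eq_fintype_card, Fintype.card_coe,
    card_filter, sum_product, ← sum_leaderCount_Icc]
  simp only [leaderCount, card_filter]
end

section
/- For each t ≥ 1, S_t(n, k) equals the number of ordered t-tuples (π_1, ..., π_t) of partitions of {1,...,n} into k blocks such that all π_i have the same set of block minima. -/
/-!
Fix a set `M` of block minima. A tuple of partitions of `s` sharing the minima `M` is a choice
of `t` independent partitions among the `N(s, M)` partitions of `s` with minima `M`, so the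
tuples are counted by `∑_{|M| = k} N(s, M) ^ t`. Let `a` be the largest element of `s`. If
`a ∈ M`, then `{a}` is a block and deleting it gives `N(s, M) = N(s \ {a}, M \ {a})`; otherwise
`a` lies in one of the `|M|` blocks of a partition of `s \ {a}` with the same minima, so
`N(s, M) = |M| · N(s \ {a}, M)`. Summing the `t`-th powers over `M` gives the recurrence of
`S_t`.
-/

/-- Generalized central factorial numbers of the second kind:
S_t(n,k) = S_t(n-1,k-1) + k^t·S_t(n-1,k), S_t(0,0) = 1, S_t(n,k) = 0 for n < k. -/
def genS (t : ℕ) : ℕ → ℕ → ℕ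
  | 0, 0 => 1
  | 0, _ + 1 => 0
  | n + 1, 0 => 0 ^ t * genS t n 0
  | n + 1, k + 1 => genS t n k + (k + 1) ^ t * genS t n (k + 1)

/-- Generalized central factorial numbers of the first kind:
s_t(n,k) = s_t(n-1,k-1) + (n-1)^t·s_t(n-1,k), s_t(0,0) = 1, s_t(n,k) = 0 for n < k. -/
def gens (t : ℕ) : ℕ → ℕ → ℕ
  | 0, 0 => 1
  | 0, _ + 1 => 0
  | n + 1, 0 => n ^ t * gens t n 0
  | n + 1, k + 1 => gens t n k + n ^ t * gens t n (k + 1)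

open Finset

namespace Finpartition

section Insert

variable {α : Type*} [DecidableEq α] {s : Finset α} {a : α}

theorem eq_of_parts_subset {P Q : Finpartition s} (h : P.parts ⊆ Q.parts) : P = Q := by
  refine Finpartition.ext (Subset.antisymm h fun C hC => ?_)
  obtain ⟨x, hx⟩ := Q.nonempty_of_mem_parts hC
  obtain ⟨D, hD, hxD⟩ := P.exists_mem (Q.le hC hx)
  rwa [Q.eq_of_mem_parts hC (h hD) hx hxD]

theorem mem_restrict_parts {t : Finset α} {P : Finpartition t} (hst : s ⊆ t) {C : Finset α} :
    C ∈ (P.restrict hst).parts ↔ C.Nonempty ∧ ∃ D ∈ P.parts, D ∩ s = C := by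
  simp [restrict, nonempty_iff_ne_empty, and_comm]

def insertSingleton (P : Finpartition s) (ha : a ∉ s) : Finpartition (insert a s) :=
  P.extend (singleton_ne_empty a) (disjoint_singleton_right.2 ha)
    (by rw [sup_eq_union, union_comm, ← insert_eq])

@[simp]
theorem insertSingleton_parts (P : Finpartition s) (ha : a ∉ s) :
    (P.insertSingleton ha).parts = insert {a} P.parts := rfl

def insertIntoPart (P : Finpartition s) (ha : a ∉ s) {B : Finset α} (hB : B ∈ P.parts) :
    Finpartition (insert a s) where
  parts := insert (insert a B) (P.parts.erase B)
  supIndep := by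
    rw [supIndep_iff_pairwiseDisjoint, coe_insert]
    refine (P.disjoint.subset (by simp)).insert fun D hD _ => ?_
    rw [mem_coe, mem_erase] at hD
    exact disjoint_insert_left.2
      ⟨fun haD => ha (P.le hD.2 haD), P.disjoint hB hD.2 (Ne.symm hD.1)⟩
  sup_parts := by
    have hsup : B ⊔ (P.parts.erase B).sup id = s := by
      have h := P.sup_parts
      rwa [← insert_erase hB, sup_insert] at h
    rw [sup_insert, id, sup_eq_union, insert_union, ← sup_eq_union, hsup]
  bot_notMem := by
    simp only [bot_eq_empty, mem_insert, mem_erase, not_or]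
    exact ⟨(insert_ne_empty a B).symm, fun h => P.empty_notMem_parts h.2⟩

@[simp]
theorem insertIntoPart_parts (P : Finpartition s) (ha : a ∉ s) {B : Finset α}
    (hB : B ∈ P.parts) :
    (P.insertIntoPart ha hB).parts = insert (insert a B) (P.parts.erase B) := rfl

theorem part_insertIntoPart (P : Finpartition s) (ha : a ∉ s) {B : Finset α}
    (hB : B ∈ P.parts) : (P.insertIntoPart ha hB).part a = insert a B :=
  part_eq_of_mem _ (by simp) (mem_insert_self a B)

theorem restrict_insertSingleton (P : Finpartition s) (ha : a ∉ s) :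
    (P.insertSingleton ha).restrict (subset_insert a s) = P := by
  refine (eq_of_parts_subset fun C hC => ?_).symm
  rw [mem_restrict_parts]
  exact ⟨P.nonempty_of_mem_parts hC, C, by simp [hC], inter_eq_left.2 (P.le hC)⟩

theorem restrict_insertIntoPart (P : Finpartition s) (ha : a ∉ s) {B : Finset α}
    (hB : B ∈ P.parts) : (P.insertIntoPart ha hB).restrict (subset_insert a s) = P := by
  refine (eq_of_parts_subset fun C hC => ?_).symm
  rw [mem_restrict_parts]
  refine ⟨P.nonempty_of_mem_parts hC, ?_⟩
  by_cases hCB : C = B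
  · subst hCB
    exact ⟨insert a C, by simp, by rw [insert_inter_of_notMem ha, inter_eq_left.2 (P.le hC)]⟩
  · exact ⟨C, by simp [hC, hCB], inter_eq_left.2 (P.le hC)⟩

theorem subset_of_mem_parts_of_notMem {P : Finpartition (insert a s)} {D : Finset α}
    (hD : D ∈ P.parts) (haD : a ∉ D) : D ⊆ s := fun _ hx =>
  (mem_insert.1 (P.le hD hx)).resolve_left fun h => haD (h ▸ hx)

theorem insertSingleton_restrict (P : Finpartition (insert a s)) (ha : a ∉ s)
    (hP : {a} ∈ P.parts) : (P.restrict (subset_insert a s)).insertSingleton ha = P := by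
  refine (eq_of_parts_subset fun D hD => ?_).symm
  rw [insertSingleton_parts, mem_insert, mem_restrict_parts]
  by_cases haD : a ∈ D
  · exact Or.inl (P.eq_of_mem_parts hD hP haD (mem_singleton_self a))
  · exact Or.inr ⟨P.nonempty_of_mem_parts hD, D, hD,
      inter_eq_left.2 (subset_of_mem_parts_of_notMem hD haD)⟩

theorem part_inter_mem_restrict_parts (P : Finpartition (insert a s)) (hP : {a} ∉ P.parts) :
    P.part a ∩ s ∈ (P.restrict (subset_insert a s)).parts := by
  have ha : a ∈ insert a s := mem_insert_self a s
  refine (mem_restrict_parts _).2 ⟨?_, P.part a, P.part_mem.2 ha, rfl⟩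
  by_contra hempty
  refine hP (eq_singleton_iff_unique_mem.2 ⟨P.mem_part_self.2 ha, fun x hx => ?_⟩ ▸
    P.part_mem.2 ha)
  refine (mem_insert.1 (P.part_subset a hx)).resolve_right fun hxs => hempty ⟨x, ?_⟩
  exact mem_inter.2 ⟨hx, hxs⟩

theorem insertIntoPart_restrict (P : Finpartition (insert a s)) (ha : a ∉ s)
    (hP : {a} ∉ P.parts) :
    (P.restrict (subset_insert a s)).insertIntoPart ha (P.part_inter_mem_restrict_parts hP) =
      P := by
  refine (eq_of_parts_subset fun D hD => ?_).symm
  rw [insertIntoPart_parts, mem_insert, mem_erase, mem_restrict_parts]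
  by_cases haD : a ∈ D
  · left
    rw [P.part_eq_of_mem hD haD, insert_inter_distrib, insert_eq_of_mem haD,
      inter_eq_left.2 (P.le hD)]
  · right
    refine ⟨fun hDB => ?_, P.nonempty_of_mem_parts hD, D, hD,
      inter_eq_left.2 (subset_of_mem_parts_of_notMem hD haD)⟩
    obtain ⟨x, hx⟩ := P.nonempty_of_mem_parts hD
    have hxa : x ∈ P.part a := (mem_inter.1 (hDB ▸ hx)).1
    exact haD (P.eq_of_mem_parts hD (P.part_mem.2 (mem_insert_self a s)) hx hxa ▸
      P.mem_part_self.2 (mem_insert_self a s))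

end Insert

section BlockMins

variable {α : Type*} [LinearOrder α] {s : Finset α} {a : α}

def blockMins (P : Finpartition s) : Finset (WithTop α) := P.parts.image Finset.min

theorem card_blockMins (P : Finpartition s) : #P.blockMins = #P.parts := by
  refine card_image_of_injOn fun B hB C hC hBC => ?_
  obtain ⟨m, hm⟩ := min_of_nonempty (P.nonempty_of_mem_parts hB)
  exact P.eq_of_mem_parts hB hC (mem_of_min hm) (mem_of_min ((hBC : B.min = C.min) ▸ hm))

theorem blockMins_subset (P : Finpartition s) : P.blockMins ⊆ s.image WithTop.some := by
  intro m hm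
  obtain ⟨B, hB, rfl⟩ := mem_image.1 hm
  obtain ⟨x, hx⟩ := min_of_nonempty (P.nonempty_of_mem_parts hB)
  exact mem_image.2 ⟨x, P.le hB (mem_of_min hx), hx.symm⟩

theorem coe_notMem_blockMins (P : Finpartition s) (ha : a ∉ s) :
    (a : WithTop α) ∉ P.blockMins := fun h => by
  simpa [ha] using P.blockMins_subset h

theorem blockMins_insertSingleton (P : Finpartition s) (ha : a ∉ s) :
    (P.insertSingleton ha).blockMins = insert ↑a P.blockMins := by
  rw [blockMins, insertSingleton_parts, image_insert, min_singleton, blockMins]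

theorem blockMins_insertIntoPart (P : Finpartition s) (ha : a ∉ s) (hs : ∀ x ∈ s, x ≤ a)
    {B : Finset α} (hB : B ∈ P.parts) : (P.insertIntoPart ha hB).blockMins = P.blockMins := by
  obtain ⟨x, hx⟩ := P.nonempty_of_mem_parts hB
  have hmin : (insert a B).min = B.min := by
    rw [min_insert,
      min_eq_right ((min_le hx).trans (WithTop.coe_le_coe.2 (hs x (P.le hB hx))))]
  rw [blockMins, insertIntoPart_parts, image_insert, hmin, ← image_insert, insert_erase hB,
    blockMins]

theorem singleton_mem_parts_iff (P : Finpartition (insert a s)) (hs : ∀ x ∈ s, x ≤ a) :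
    {a} ∈ P.parts ↔ (a : WithTop α) ∈ P.blockMins := by
  refine ⟨fun h => mem_image.2 ⟨{a}, h, min_singleton⟩, fun h => ?_⟩
  obtain ⟨D, hD, hDa⟩ := mem_image.1 h
  suffices D = {a} from this ▸ hD
  refine eq_singleton_iff_unique_mem.2 ⟨mem_of_min hDa, fun x hx => ?_⟩
  have hax : a ≤ x := WithTop.coe_le_coe.1 (hDa ▸ min_le hx)
  rcases mem_insert.1 (P.le hD hx) with rfl | hxs
  · rfl
  · exact le_antisymm (hs x hxs) hax

theorem blockMins_restrict (P : Finpartition (insert a s)) (ha : a ∉ s)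
    (hs : ∀ x ∈ s, x ≤ a) :
    (P.restrict (subset_insert a s)).blockMins = P.blockMins.erase ↑a := by
  by_cases hP : {a} ∈ P.parts
  · conv_rhs => rw [← P.insertSingleton_restrict ha hP]
    rw [blockMins_insertSingleton, erase_insert (coe_notMem_blockMins _ ha)]
  · rw [erase_eq_of_notMem ((singleton_mem_parts_iff P hs).not.1 hP)]
    conv_rhs => rw [← P.insertIntoPart_restrict ha hP]
    rw [blockMins_insertIntoPart _ ha hs]

end BlockMins

end Finpartition

section Counting

open Finpartition

variable {α : Type*} [LinearOrder α]

noncomputable def numPartitionsWithBlockMins (s : Finset α) (M : Finset (WithTop α)) : ℕ :=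
  Nat.card {P : Finpartition s // P.blockMins = M}

variable {s : Finset α} {a : α} {M : Finset (WithTop α)}

theorem numPartitionsWithBlockMins_insert_insert (hs : ∀ x ∈ s, x < a) (haM : ↑a ∉ M) :
    numPartitionsWithBlockMins (insert a s) (insert ↑a M) = numPartitionsWithBlockMins s M :=
  have ha : a ∉ s := fun h => (hs a h).false
  have hs : ∀ x ∈ s, x ≤ a := fun x hx => (hs x hx).le
  Nat.card_congr
    { toFun P := ⟨P.1.restrict (subset_insert a s), by
        rw [blockMins_restrict _ ha hs, P.2, erase_insert haM]⟩
      invFun Q := ⟨Q.1.insertSingleton ha, by rw [blockMins_insertSingleton, Q.2]⟩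
      left_inv P := Subtype.ext <| insertSingleton_restrict _ ha <|
        (singleton_mem_parts_iff _ hs).2 (by rw [P.2]; exact mem_insert_self _ _)
      right_inv Q := Subtype.ext (restrict_insertSingleton _ ha) }

theorem numPartitionsWithBlockMins_insert (hs : ∀ x ∈ s, x < a) (haM : ↑a ∉ M) :
    numPartitionsWithBlockMins (insert a s) M = #M * numPartitionsWithBlockMins s M := by
  have ha : a ∉ s := fun h => (hs a h).false
  replace hs : ∀ x ∈ s, x ≤ a := fun x hx => (hs x hx).le
  have hP (P : {P : Finpartition (insert a s) // P.blockMins = M}) : {a} ∉ P.1.parts :=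
    fun h => haM (P.2 ▸ (singleton_mem_parts_iff _ hs).1 h)
  let e : {P : Finpartition (insert a s) // P.blockMins = M} ≃
      Σ Q : {Q : Finpartition s // Q.blockMins = M}, Q.1.parts :=
    { toFun P := ⟨⟨P.1.restrict (subset_insert a s), by
          rw [blockMins_restrict _ ha hs, P.2, erase_eq_of_notMem haM]⟩,
        ⟨_, P.1.part_inter_mem_restrict_parts (hP P)⟩⟩
      invFun Q := ⟨Q.1.1.insertIntoPart ha Q.2.2, by
        rw [blockMins_insertIntoPart _ ha hs, Q.1.2]⟩
      left_inv P := Subtype.ext (insertIntoPart_restrict _ ha (hP P))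
      right_inv Q := Sigma.subtype_ext (Subtype.ext (restrict_insertIntoPart _ ha Q.2.2)) <| by
        dsimp only
        rw [part_insertIntoPart, insert_inter_of_notMem ha, inter_eq_left.2 (Q.1.1.le Q.2.2)] }
  have hcard (Q : {Q : Finpartition s // Q.blockMins = M}) : Nat.card Q.1.parts = #M := by
    rw [Nat.card_eq_finsetCard, ← card_blockMins, Q.2]
  rw [numPartitionsWithBlockMins, Nat.card_congr e, Nat.card_sigma,
    sum_congr rfl fun Q _ => hcard Q, sum_const, card_univ, ← Nat.card_eq_fintype_card,
    smul_eq_mul, mul_comm, numPartitionsWithBlockMins]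

theorem sum_numPartitionsWithBlockMins_pow (t : ℕ) (s : Finset α) (k : ℕ) :
    ∑ M ∈ (s.image WithTop.some).powersetCard k, numPartitionsWithBlockMins s M ^ t =
      genS t #s k := by
  induction s using Finset.induction_on_max generalizing k with
  | empty =>
    cases k with
    | zero =>
      rw [powersetCard_zero, sum_singleton, card_empty, genS, numPartitionsWithBlockMins,
        Nat.card_eq_one_iff_exists.2 ⟨⟨⊥, by simp [blockMins]⟩,
          fun P => Subtype.ext (Finpartition.ext (by simp [parts_eq_empty_iff]))⟩, one_pow]
    | succ k => simp [genS]
  | insert a s hs ih =>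
    have ha : a ∉ s := fun h => (hs a h).false
    have haS : (a : WithTop α) ∉ s.image WithTop.some := by simpa using ha
    have haM {j M} (hM : M ∈ (s.image WithTop.some).powersetCard j) : (a : WithTop α) ∉ M :=
      fun h => haS ((mem_powersetCard.1 hM).1 h)
    rw [image_insert, card_insert_of_notMem ha]
    cases k with
    | zero =>
      rw [powersetCard_zero, sum_singleton,
        numPartitionsWithBlockMins_insert hs (notMem_empty _), card_empty, genS, ← ih,
        powersetCard_zero, sum_singleton, mul_pow]
    | succ k =>
      have hdisj : Disjoint ((s.image WithTop.some).powersetCard (k + 1))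
          (((s.image WithTop.some).powersetCard k).image (insert ↑a)) := by
        refine disjoint_left.2 fun M hM hM' => ?_
        obtain ⟨N, -, rfl⟩ := mem_image.1 hM'
        exact haM hM (mem_insert_self _ _)
      have hinj : Set.InjOn (insert (a : WithTop α)) ((s.image WithTop.some).powersetCard k :
          Set (Finset (WithTop α))) := fun M hM N hN h => by
        rw [← erase_insert (haM hM), h, erase_insert (haM hN)]
      rw [powersetCard_succ_insert haS, sum_union hdisj, sum_image hinj, genS, ← ih, ← ih,
        mul_sum, add_comm]
      congr 1
      · exact sum_congr rfl fun M hM => by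
          rw [numPartitionsWithBlockMins_insert_insert hs (haM hM)]
      · exact sum_congr rfl fun M hM => by
          rw [numPartitionsWithBlockMins_insert hs (haM hM), (mem_powersetCard.1 hM).2,
            mul_pow]

theorem card_tuples_sameBlockMins {ι : Type*} [Fintype ι] [Nonempty ι] (s : Finset α)
    (k : ℕ) :
    Nat.card {f : ι → Finpartition s //
      (∀ i, #(f i).parts = k) ∧ ∀ i j, (f i).blockMins = (f j).blockMins} =
    ∑ M ∈ (s.image WithTop.some).powersetCard k,
      numPartitionsWithBlockMins s M ^ Fintype.card ι := by
  let i₀ : ι := Classical.arbitrary ι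
  let F (f : {f : ι → Finpartition s //
      (∀ i, #(f i).parts = k) ∧ ∀ i j, (f i).blockMins = (f j).blockMins}) :
      (s.image WithTop.some).powersetCard k :=
    ⟨(f.1 i₀).blockMins,
      mem_powersetCard.2 ⟨blockMins_subset _, (card_blockMins _).trans (f.2.1 i₀)⟩⟩
  have e (M : (s.image WithTop.some).powersetCard k) :
      {f // F f = M} ≃ (ι → {P : Finpartition s // P.blockMins = M}) :=
    { toFun f i := ⟨f.1.1 i, (f.1.2.2 i i₀).trans (congrArg Subtype.val f.2)⟩
      invFun g := ⟨⟨fun i => (g i).1, fun i => by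
          rw [← card_blockMins, (g i).2, (mem_powersetCard.1 M.2).2],
          fun i j => (g i).2.trans (g j).2.symm⟩, Subtype.ext (g i₀).2⟩
      left_inv _ := rfl
      right_inv _ := rfl }
  rw [← Nat.card_congr (Equiv.sigmaFiberEquiv F), Nat.card_sigma,
    ← sum_coe_sort ((s.image WithTop.some).powersetCard k)]
  refine sum_congr rfl fun M _ => ?_
  rw [Nat.card_congr (e M), Nat.card_fun, Nat.card_eq_fintype_card (α := ι)]
  rfl

end Counting

/-- S_t(n,k) is the number of ordered t-tuples (π_1,...,π_t) of partitions of {1,...,n}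
into k blocks all having the same set of block minima. -/
theorem genS_eq_tuples_of_partitions (t n k : ℕ) (ht : 1 ≤ t) :
    Nat.card {f : Fin t → Finpartition (Finset.Icc 1 n) //
      (∀ i, (f i).parts.card = k) ∧
      (∀ i j, (f i).parts.image Finset.min = (f j).parts.image Finset.min)} =
    genS t n k := by
  have : Nonempty (Fin t) := ⟨⟨0, ht⟩⟩
  have h := card_tuples_sameBlockMins (ι := Fin t) (Finset.Icc 1 n) k
  rwa [Fintype.card_fin, sum_numPartitionsWithBlockMins_pow, Nat.card_Icc,
    Nat.add_sub_cancel] at h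
end

section
/- For each t ≥ 1, s_t(n, k) equals the number of ordered t-tuples (σ_1, ..., σ_t) of permutations of {1,...,n} each having k cycles, such that all σ_i have the same set of cycle minima. -/
open scoped Classical

/-- The set of cycle minima of a permutation of Fin n. -/
noncomputable def cycleMins (n : ℕ) (σ : Equiv.Perm (Fin n)) : Finset (Fin n) :=
  Finset.univ.filter fun x => ∀ y, σ.SameCycle x y → x ≤ y

open Equiv Equiv.Perm Fin

noncomputable def E (n : ℕ) : Equiv.Perm (Fin (n+1)) ≃ Option (Fin n) × Equiv.Perm (Fin n) :=
  (Equiv.permCongr finSuccEquivLast).trans Equiv.Perm.decomposeOption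

variable {n : ℕ} (τ : Equiv.Perm (Fin n)) (q : Fin n)

lemma E_symm_apply (p : Option (Fin n)) (x : Fin (n+1)) :
    (E n).symm (p, τ) x =
      finSuccEquivLast.symm ((Equiv.swap none p) (Option.map τ (finSuccEquivLast x))) := by
  simp [E, Equiv.permCongr_apply]

example : True := trivial

lemma gnone_castSucc (i : Fin n) :
    (E n).symm (none, τ) (castSucc i) = castSucc (τ i) := by
  simp [E_symm_apply]

lemma gnone_last : (E n).symm (none, τ) (last n) = last n := by
  simp [E_symm_apply]

lemma gsome_last : (E n).symm (some q, τ) (last n) = castSucc q := by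
  simp [E_symm_apply]

lemma gsome_castSucc (i : Fin n) :
    (E n).symm (some q, τ) (castSucc i) =
      if τ i = q then last n else castSucc (τ i) := by
  rcases eq_or_ne (τ i) q with h | h
  · simp [E_symm_apply, h]
  · rw [E_symm_apply]
    simp only [finSuccEquivLast_castSucc, Option.map_some]
    rw [Equiv.swap_apply_of_ne_of_ne (by simp) (by simpa using h)]
    simp [h]

lemma gnone_pow (m : ℕ) : ∀ i : Fin n,
    ((E n).symm (none, τ) ^ m) (castSucc i) = castSucc ((τ ^ m) i) := by
  induction m with
  | zero => simp
  | succ m ih =>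
    intro i
    rw [pow_succ, pow_succ, Equiv.Perm.mul_apply, Equiv.Perm.mul_apply,
      gnone_castSucc, ih (τ i)]

lemma sc_none_iff (i j : Fin n) :
    ((E n).symm (none, τ)).SameCycle (castSucc i) (castSucc j) ↔ τ.SameCycle i j := by
  constructor
  · rintro h
    obtain ⟨m, -, hm⟩ := h.exists_pow_eq'
    rw [gnone_pow] at hm
    exact ⟨m, by exact_mod_cast (castSucc_injective n hm)⟩
  · rintro h
    obtain ⟨m, -, hm⟩ := h.exists_pow_eq'
    exact ⟨m, by rw [zpow_natCast, gnone_pow, hm]⟩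

lemma sc_none_not_last (i : Fin n) :
    ¬ ((E n).symm (none, τ)).SameCycle (castSucc i) (last n) := by
  intro h
  obtain ⟨m, -, hm⟩ := h.exists_pow_eq'
  rw [gnone_pow] at hm
  exact (castSucc_lt_last _).ne hm

lemma sc_none_last_eq {y : Fin (n+1)} :
    ((E n).symm (none, τ)).SameCycle (last n) y → y = last n := by
  rintro ⟨m, hm⟩
  rw [Equiv.Perm.zpow_apply_eq_self_of_apply_eq_self (gnone_last τ)] at hm
  exact hm.symm

/-- Projection for the `some q` case. -/
def pr (q : Fin n) (x : Fin (n+1)) : Fin n := Fin.lastCases q (fun i => i) x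

@[simp] lemma pr_castSucc (i : Fin n) : pr q (castSucc i) = i := Fin.lastCases_castSucc ..
@[simp] lemma pr_last : pr q (last n) = q := Fin.lastCases_last ..

lemma step_some (x : Fin (n+1)) :
    τ.SameCycle (pr q x) (pr q ((E n).symm (some q, τ) x)) := by
  induction x using Fin.lastCases with
  | last => rw [gsome_last, pr_last, pr_castSucc]
  | cast i =>
    rw [pr_castSucc, gsome_castSucc]
    split
    · next h =>
      rw [pr_last, ← h]
      exact Equiv.Perm.sameCycle_apply_right.mpr (Equiv.Perm.SameCycle.refl _ _)
    · rw [pr_castSucc]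
      exact Equiv.Perm.sameCycle_apply_right.mpr (Equiv.Perm.SameCycle.refl _ _)

lemma proj_some_aux (m : ℕ) : ∀ x : Fin (n+1),
    τ.SameCycle (pr q x) (pr q (((E n).symm (some q, τ) ^ m) x)) := by
  induction m with
  | zero => intro x; exact Equiv.Perm.SameCycle.refl _ _
  | succ m ih =>
    intro x
    rw [pow_succ, Equiv.Perm.mul_apply]
    exact (step_some τ q x).trans (ih _)

lemma proj_some {x y : Fin (n+1)} (h : ((E n).symm (some q, τ)).SameCycle x y) :
    τ.SameCycle (pr q x) (pr q y) := by
  obtain ⟨m, -, rfl⟩ := h.exists_pow_eq'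
  exact proj_some_aux τ q m x

lemma up_some_step (i : Fin n) :
    ((E n).symm (some q, τ)).SameCycle (castSucc i) (castSucc (τ i)) := by
  rcases eq_or_ne (τ i) q with h | h
  · refine ⟨2, ?_⟩
    have h1 : (E n).symm (some q, τ) (castSucc i) = last n := by rw [gsome_castSucc]; simp [h]
    have h2 : (E n).symm (some q, τ) (last n) = castSucc q := gsome_last τ q
    rw [show (2:ℤ) = 1 + 1 by norm_num, zpow_add, zpow_one, Equiv.Perm.mul_apply, h1, h2, h]
  · exact ⟨1, by rw [zpow_one, gsome_castSucc]; simp [h]⟩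

lemma up_some_aux (m : ℕ) : ∀ i : Fin n,
    ((E n).symm (some q, τ)).SameCycle (castSucc i) (castSucc ((τ ^ m) i)) := by
  induction m with
  | zero => intro i; exact Equiv.Perm.SameCycle.refl _ _
  | succ m ih =>
    intro i
    rw [pow_succ, Equiv.Perm.mul_apply]
    exact (up_some_step τ q i).trans (ih (τ i))

lemma up_some {i j : Fin n} (h : τ.SameCycle i j) :
    ((E n).symm (some q, τ)).SameCycle (castSucc i) (castSucc j) := by
  obtain ⟨m, -, rfl⟩ := h.exists_pow_eq'
  exact up_some_aux τ q m i

lemma sc_last_some : ((E n).symm (some q, τ)).SameCycle (last n) (castSucc q) :=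
  ⟨1, by rw [zpow_one, gsome_last]⟩

lemma sc_some_iff (i j : Fin n) :
    ((E n).symm (some q, τ)).SameCycle (castSucc i) (castSucc j) ↔ τ.SameCycle i j := by
  constructor
  · intro h
    have := proj_some τ q h
    simpa using this
  · exact up_some τ q

lemma sc_some_last_iff (i : Fin n) :
    ((E n).symm (some q, τ)).SameCycle (castSucc i) (last n) ↔ τ.SameCycle i q := by
  constructor
  · intro h
    have := proj_some τ q h
    simpa using this
  · intro h
    exact (up_some τ q h).trans (sc_last_some τ q).symm

lemma mem_cycleMins {n : ℕ} (σ : Equiv.Perm (Fin n)) (x : Fin n) :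
    x ∈ cycleMins n σ ↔ ∀ y, σ.SameCycle x y → x ≤ y := by
  simp [cycleMins]

lemma cm_none : cycleMins (n+1) ((E n).symm (none, τ)) =
    insert (last n) ((cycleMins n τ).image castSucc) := by
  ext x
  rw [mem_cycleMins, Finset.mem_insert, Finset.mem_image]
  induction x using Fin.lastCases with
  | last =>
    constructor
    · intro _; exact Or.inl rfl
    · intro _ y hy; rw [sc_none_last_eq τ hy]
  | cast i =>
    constructor
    · intro h
      refine Or.inr ⟨i, (mem_cycleMins τ i).mpr fun j hj => ?_, rfl⟩
      exact castSucc_le_castSucc_iff.mp (h _ ((sc_none_iff τ i j).mpr hj))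
    · rintro (h | ⟨j, hj, hji⟩) y hy
      · exact absurd h (castSucc_lt_last i).ne
      · rw [show j = i from castSucc_injective n hji] at hj
        induction y using Fin.lastCases with
        | last => exact absurd hy (sc_none_not_last τ i)
        | cast j' =>
          exact castSucc_le_castSucc_iff.mpr
            ((mem_cycleMins τ i).mp hj j' ((sc_none_iff τ i j').mp hy))

lemma cm_some : cycleMins (n+1) ((E n).symm (some q, τ)) =
    (cycleMins n τ).image castSucc := by
  ext x
  rw [mem_cycleMins, Finset.mem_image]
  induction x using Fin.lastCases with
  | last =>
    constructor
    · intro h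
      exact absurd (h _ (sc_last_some τ q)) (not_le.mpr (castSucc_lt_last q))
    · rintro ⟨j, -, hj⟩
      exact absurd hj (castSucc_lt_last j).ne
  | cast i =>
    constructor
    · intro h
      exact ⟨i, (mem_cycleMins τ i).mpr fun j hj =>
        castSucc_le_castSucc_iff.mp (h _ ((sc_some_iff τ q i j).mpr hj)), rfl⟩
    · rintro ⟨j, hj, hji⟩ y hy
      rw [show j = i from castSucc_injective n hji] at hj
      induction y using Fin.lastCases with
      | last => exact Fin.le_last _
      | cast j' =>
        exact castSucc_le_castSucc_iff.mpr
          ((mem_cycleMins τ i).mp hj j' ((sc_some_iff τ q i j').mp hy))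

lemma last_notMem_image (s : Finset (Fin n)) : last n ∉ s.image castSucc := by
  simp only [Finset.mem_image, not_exists]
  rintro j ⟨-, hj⟩
  exact (castSucc_lt_last j).ne hj

lemma image_cs_inj {s s' : Finset (Fin n)} (h : s.image castSucc = s'.image castSucc) :
    s = s' :=
  Finset.image_injective (castSucc_injective n) h

lemma insert_image_cs_inj {s s' : Finset (Fin n)}
    (h : insert (last n) (s.image castSucc) = insert (last n) (s'.image castSucc)) :
    s = s' := by
  apply image_cs_inj
  rw [← Finset.erase_insert (last_notMem_image s), h,
    Finset.erase_insert (last_notMem_image s')]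

def P (t n k : ℕ) (f : Fin t → Equiv.Perm (Fin n)) : Prop :=
  (∀ i, (cycleMins n (f i)).card = k) ∧ (∀ i j, cycleMins n (f i) = cycleMins n (f j))

noncomputable def PsiL (t n k : ℕ)
    (x : {f : Fin t → Equiv.Perm (Fin n) // P t n k f}) :
    {f : Fin t → Equiv.Perm (Fin (n+1)) // P t (n+1) (k+1) f} :=
  ⟨fun i => (E n).symm (none, x.1 i), by
    obtain ⟨τ, h1, h2⟩ := x
    constructor
    · intro i
      rw [cm_none, Finset.card_insert_of_notMem (last_notMem_image _),
        Finset.card_image_of_injective _ (castSucc_injective n), h1 i]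
    · intro i j
      rw [cm_none, cm_none, h2 i j]⟩

noncomputable def PsiR (t n k : ℕ)
    (x : (Fin t → Fin n) × {f : Fin t → Equiv.Perm (Fin n) // P t n (k+1) f}) :
    {f : Fin t → Equiv.Perm (Fin (n+1)) // P t (n+1) (k+1) f} :=
  ⟨fun i => (E n).symm (some (x.1 i), x.2.1 i), by
    obtain ⟨g, τ, h1, h2⟩ := x
    constructor
    · intro i
      rw [cm_some, Finset.card_image_of_injective _ (castSucc_injective n), h1 i]
    · intro i j
      rw [cm_some, cm_some, h2 i j]⟩

lemma hlast_mem (f : Equiv.Perm (Fin (n+1))) :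
    last n ∈ cycleMins (n+1) f ↔ ((E n) f).1 = none := by
  have hf : f = (E n).symm (((E n) f).1, ((E n) f).2) := by
    rw [Prod.mk.eta, Equiv.symm_apply_apply]
  constructor
  · intro hm
    by_contra hne
    obtain ⟨q, hq⟩ := Option.ne_none_iff_exists'.mp hne
    rw [hq] at hf
    rw [hf, cm_some] at hm
    exact last_notMem_image _ hm
  · intro hq
    rw [hq] at hf
    rw [hf, cm_none]
    exact Finset.mem_insert_self _ _

lemma Psi_bij (t n k : ℕ) (ht : 1 ≤ t) :
    Function.Bijective (Sum.elim (PsiL t n k) (PsiR t n k)) := by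
  have i0 : Fin t := ⟨0, ht⟩
  constructor
  · rintro (⟨τ, hτ⟩ | ⟨g, τ, hτ⟩) (⟨τ', hτ'⟩ | ⟨g', τ', hτ'⟩) hab
    · have key : ∀ i, (E n).symm (none, τ i) = (E n).symm (none, τ' i) :=
        fun i => congrFun (congrArg Subtype.val hab) i
      simp only [Sum.inl.injEq]
      exact Subtype.ext (funext fun i => ((Prod.mk.injEq _ _ _ _).mp
        ((E n).symm.injective (key i))).2)
    · have key := (E n).symm.injective (congrFun (congrArg Subtype.val hab) i0)
      simp at key
    · have key := (E n).symm.injective (congrFun (congrArg Subtype.val hab) i0)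
      simp at key
    · have key : ∀ i, (E n).symm (some (g i), τ i) = (E n).symm (some (g' i), τ' i) :=
        fun i => congrFun (congrArg Subtype.val hab) i
      have key2 : ∀ i, g i = g' i ∧ τ i = τ' i := by
        intro i
        have := (Prod.mk.injEq _ _ _ _).mp ((E n).symm.injective (key i))
        exact ⟨Option.some_injective _ this.1, this.2⟩
      simp only [Sum.inr.injEq, Prod.mk.injEq]
      exact ⟨funext fun i => (key2 i).1, Subtype.ext (funext fun i => (key2 i).2)⟩
  · rintro ⟨f, h1, h2⟩
    set p : Fin t → Option (Fin n) := fun i => ((E n) (f i)).1 with hp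
    set τ : Fin t → Equiv.Perm (Fin n) := fun i => ((E n) (f i)).2 with hτdef
    have hf : ∀ i, f i = (E n).symm (p i, τ i) := fun i => by simp [hp, hτdef]
    have hlast : ∀ i, (last n ∈ cycleMins (n+1) (f i) ↔ p i = none) :=
      fun i => hlast_mem (f i)
    cases hp0 : p i0 with
    | none =>
      have hall : ∀ i, p i = none := by
        intro i
        have hm : last n ∈ cycleMins (n+1) (f i0) := (hlast i0).mpr hp0
        rw [h2 i0 i] at hm
        exact (hlast i).mp hm
      have hcm : ∀ i, cycleMins (n+1) (f i)
          = insert (last n) ((cycleMins n (τ i)).image castSucc) := by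
        intro i
        conv_lhs => rw [hf i, hall i]
        rw [cm_none]
      refine ⟨Sum.inl ⟨τ, fun i => ?_, fun i j => ?_⟩, ?_⟩
      · have := h1 i
        rw [hcm i, Finset.card_insert_of_notMem (last_notMem_image _),
          Finset.card_image_of_injective _ (castSucc_injective n)] at this
        omega
      · have := h2 i j
        rw [hcm i, hcm j] at this
        exact insert_image_cs_inj this
      · refine Subtype.ext (funext fun i => ?_)
        show (E n).symm (none, τ i) = f i
        rw [hf i, hall i]
    | some q0 =>
      have hall : ∀ i, ∃ q, p i = some q := by
        intro i
        cases hpi : p i with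
        | none =>
          exfalso
          have hm : last n ∈ cycleMins (n+1) (f i) := (hlast i).mpr hpi
          rw [h2 i i0] at hm
          rw [(hlast i0), hp0] at hm
          exact absurd hm (by simp)
        | some q => exact ⟨q, rfl⟩
      choose g hg using hall
      have hcm : ∀ i, cycleMins (n+1) (f i) = (cycleMins n (τ i)).image castSucc := by
        intro i
        conv_lhs => rw [hf i, hg i]
        rw [cm_some]
      refine ⟨Sum.inr ⟨g, τ, fun i => ?_, fun i j => ?_⟩, ?_⟩
      · have := h1 i
        rw [hcm i, Finset.card_image_of_injective _ (castSucc_injective n)] at this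
        exact this
      · have := h2 i j
        rw [hcm i, hcm j] at this
        exact image_cs_inj this
      · refine Subtype.ext (funext fun i => ?_)
        show (E n).symm (some (g i), τ i) = f i
        rw [hf i, hg i]

lemma count_succ (t n k : ℕ) (ht : 1 ≤ t) :
    Nat.card {f : Fin t → Equiv.Perm (Fin (n+1)) // P t (n+1) (k+1) f} =
      Nat.card {f : Fin t → Equiv.Perm (Fin n) // P t n k f} +
      n ^ t * Nat.card {f : Fin t → Equiv.Perm (Fin n) // P t n (k+1) f} := by
  rw [← Nat.card_eq_of_bijective _ (Psi_bij t n k ht), Nat.card_sum, Nat.card_prod]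
  congr 2
  simp [Nat.card_eq_fintype_card]

lemma cycleMins_zero (σ : Equiv.Perm (Fin 0)) : cycleMins 0 σ = ∅ := by
  ext x
  exact x.elim0

lemma count_n0_k0 (t : ℕ) : Nat.card {f : Fin t → Equiv.Perm (Fin 0) // P t 0 0 f} = 1 := by
  rw [Nat.card_eq_one_iff_unique]
  constructor
  · constructor
    rintro ⟨f, -⟩ ⟨f', -⟩
    exact Subtype.ext (funext fun i => Subsingleton.elim _ _)
  · exact ⟨⟨fun _ => 1, fun i => by simp [cycleMins_zero], fun i j => by simp [cycleMins_zero]⟩⟩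

lemma count_n0_ksucc (t k : ℕ) (ht : 1 ≤ t) :
    Nat.card {f : Fin t → Equiv.Perm (Fin 0) // P t 0 (k+1) f} = 0 := by
  have : IsEmpty {f : Fin t → Equiv.Perm (Fin 0) // P t 0 (k+1) f} := by
    constructor
    rintro ⟨f, h1, -⟩
    have := h1 ⟨0, ht⟩
    rw [cycleMins_zero] at this
    simp at this
  exact Nat.card_of_isEmpty

lemma zero_mem_cycleMins (σ : Equiv.Perm (Fin (n+1))) : 0 ∈ cycleMins (n+1) σ :=
  (mem_cycleMins σ 0).mpr fun y _ => Fin.zero_le y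

lemma count_succ_zero (t n : ℕ) (ht : 1 ≤ t) :
    Nat.card {f : Fin t → Equiv.Perm (Fin (n+1)) // P t (n+1) 0 f} = 0 := by
  have : IsEmpty {f : Fin t → Equiv.Perm (Fin (n+1)) // P t (n+1) 0 f} := by
    constructor
    rintro ⟨f, h1, -⟩
    have h0 := zero_mem_cycleMins (f ⟨0, ht⟩)
    rw [Finset.card_eq_zero.mp (h1 ⟨0, ht⟩)] at h0
    exact absurd h0 (Finset.notMem_empty _)
  exact Nat.card_of_isEmpty

lemma gens_succ_zero (t : ℕ) (ht : 1 ≤ t) : ∀ m, gens t (m+1) 0 = 0 := by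
  intro m
  induction m with
  | zero => show 0 ^ t * gens t 0 0 = 0; rw [zero_pow (by omega)]; ring
  | succ m ih => show (m+1) ^ t * gens t (m+1) 0 = 0; rw [ih]; ring

/-- s_t(n,k) is the number of ordered t-tuples (σ_1,...,σ_t) of permutations of {1,...,n},
each with k cycles, all having the same set of cycle minima. -/
theorem gens_eq_tuples_of_permutations (t n k : ℕ) (ht : 1 ≤ t) :
    Nat.card {f : Fin t → Equiv.Perm (Fin n) //
      (∀ i, (cycleMins n (f i)).card = k) ∧
      (∀ i j, cycleMins n (f i) = cycleMins n (f j))} =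
    gens t n k := by
  show Nat.card {f : Fin t → Equiv.Perm (Fin n) // P t n k f} = gens t n k
  induction n generalizing k with
  | zero =>
    cases k with
    | zero => rw [count_n0_k0]; rfl
    | succ k => rw [count_n0_ksucc t k ht]; rfl
  | succ n ih =>
    cases k with
    | zero => rw [count_succ_zero t n ht, gens_succ_zero t ht n]
    | succ k =>
      rw [count_succ t n k ht, ih k, ih (k+1)]
      rfl
end
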